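/- arXiv:1702.00140 — 6 statements merged into one kernel-verified Lean document; each statement's English description precedes it below -/
import Mathlib

section
/- Let π, τ ∈ S_n with τ ∈ Q(π,i) and π(i) = j < k = τ(i). Then l(τ) − l(π) = |{t > i : j+1 ≤ π(t) ≤ k}| − |{t < i : j+1 ≤ π(t) ≤ k}| = |{t > i : j ≤ τ(t) ≤ k−1}| − |{t < i : j ≤ τ(t) ≤ k−1}|, where l denotes the number of inversions. -/
open Filter Finset MeasureTheory

/-- Number of inversions of a permutation of `Fin n`. -/
def inversions (n : ℕ) (π : Equiv.Perm (Fin n)) : ℕ :=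
  (Finset.univ.filter (fun p : Fin n × Fin n => p.1 < p.2 ∧ π p.2 < π p.1)).card

/-- The `(n,q)`-Mallows probability mass function on `S_n`. -/
noncomputable def mallowsPMF (n : ℕ) (q : ℝ) (π : Equiv.Perm (Fin n)) : ℝ :=
  q ^ inversions n π / ∑ σ : Equiv.Perm (Fin n), q ^ inversions n σ

open Classical in
/-- The `(n,q)`-Mallows probability of an event `P` of permutations. -/
noncomputable def mallowsProb (n : ℕ) (q : ℝ) (P : Equiv.Perm (Fin n) → Prop) : ℝ :=
  ∑ π : Equiv.Perm (Fin n), if P π then mallowsPMF n q π else 0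

/-- Expectation with respect to the `(n,q)`-Mallows measure. -/
noncomputable def mallowsExp (n : ℕ) (q : ℝ) (f : Equiv.Perm (Fin n) → ℝ) : ℝ :=
  ∑ π : Equiv.Perm (Fin n), mallowsPMF n q π * f π

/-- Action of a permutation of `Fin n` on one-based indices `{1,…,n}`. -/
def permAct (n : ℕ) (π : Equiv.Perm (Fin n)) (i : ℕ) : ℕ :=
  if h : 1 ≤ i ∧ i ≤ n then ((π ⟨i - 1, by omega⟩ : Fin n) : ℕ) + 1 else i

/-- The limiting density `u(x,y,β)` from Starr's theorem. -/
noncomputable def mallowsU (x y β : ℝ) : ℝ :=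
  if β = 0 then 1
  else (β / 2) * Real.sinh (β / 2) /
    (Real.exp (β / 4) * Real.cosh (β * (x - y) / 2)
      - Real.exp (-β / 4) * Real.cosh (β * (x + y - 1) / 2)) ^ 2

private lemma count_lt (n : ℕ) (σ : Equiv.Perm (Fin n)) (t : Fin n) :
    (univ.filter (fun s => σ s < σ t)).card = (σ t : ℕ) := by
  have h1 : (univ.filter (fun s => σ s < σ t)).card
      = (univ.filter (fun w : Fin n => w < σ t)).card := by
    apply Finset.card_bij (fun s _ => σ s)
    · intro a ha; simp_all
    · intro a ha b hb hab; exact σ.injective hab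
    · intro b hb; exact ⟨σ.symm b, by simp_all⟩
  rw [h1, ← Fin.card_Iio (σ t)]
  congr 1
  ext w; simp [Finset.mem_Iio]

private lemma count_split (n : ℕ) (σ : Equiv.Perm (Fin n)) (i t : Fin n) :
    (σ t : ℕ) = (univ.filter (fun s => s ≠ i ∧ σ s < σ t)).card
      + (if σ i < σ t then 1 else 0) := by
  rw [← count_lt n σ t]
  have h := Finset.card_filter_add_card_filter_not
    (s := univ.filter (fun s => σ s < σ t)) (p := fun s => s ≠ i)
  rw [Finset.filter_filter, Finset.filter_filter] at h
  have h2 : (univ.filter (fun s => σ s < σ t ∧ ¬ s ≠ i)).card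
      = (if σ i < σ t then 1 else 0) := by
    have he : univ.filter (fun s => σ s < σ t ∧ ¬ s ≠ i)
        = if σ i < σ t then {i} else ∅ := by
      ext s
      by_cases hs : s = i <;> split_ifs with hi <;> simp [hs, hi]
    rw [he]
    split_ifs <;> simp
  have h3 : univ.filter (fun s => σ s < σ t ∧ s ≠ i)
      = univ.filter (fun s => s ≠ i ∧ σ s < σ t) :=
    Finset.filter_congr (fun s _ => by tauto)
  rw [h3, h2] at h
  omega

private lemma value_map (n : ℕ) (π τ : Equiv.Perm (Fin n)) (i : Fin n)
    (hQ : ∀ s t : Fin n, s ≠ i → t ≠ i → (π s < π t ↔ τ s < τ t))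
    (hjk : π i < τ i) :
    ∀ t : Fin n, t ≠ i →
      ((π t : ℕ) < π i ∧ (τ t : ℕ) = π t) ∨
      ((π i : ℕ) < π t ∧ (π t : ℕ) ≤ τ i ∧ (τ t : ℕ) + 1 = π t) ∨
      ((τ i : ℕ) < π t ∧ (τ t : ℕ) = π t) := by
  intro t ht
  have hπ := count_split n π i t
  have hτ := count_split n τ i t
  have hset : univ.filter (fun s => s ≠ i ∧ π s < π t)
      = univ.filter (fun s => s ≠ i ∧ τ s < τ t) :=
    Finset.filter_congr (fun s _ => and_congr_right fun hs => hQ s t hs ht)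
  rw [hset] at hπ
  have hne1 : (π t : ℕ) ≠ (π i : ℕ) := fun h => ht (π.injective (Fin.ext h))
  have hne2 : (τ t : ℕ) ≠ (τ i : ℕ) := fun h => ht (τ.injective (Fin.ext h))
  have hjk' : (π i : ℕ) < (τ i : ℕ) := hjk
  simp only [Fin.lt_def] at hπ hτ
  split_ifs at hπ hτ <;> omega

private lemma inv_split (n : ℕ) (σ : Equiv.Perm (Fin n)) (i : Fin n) :
    inversions n σ
      = (univ.filter (fun p : Fin n × Fin n =>
          p.1 ≠ i ∧ p.2 ≠ i ∧ p.1 < p.2 ∧ σ p.2 < σ p.1)).card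
        + (univ.filter (fun t : Fin n => t < i ∧ σ i < σ t)).card
        + (univ.filter (fun t : Fin n => i < t ∧ σ t < σ i)).card := by
  rw [inversions]
  have h1 := Finset.card_filter_add_card_filter_not
    (s := univ.filter (fun p : Fin n × Fin n => p.1 < p.2 ∧ σ p.2 < σ p.1))
    (p := fun p => p.1 = i)
  rw [Finset.filter_filter, Finset.filter_filter] at h1
  have h2 := Finset.card_filter_add_card_filter_not
    (s := univ.filter (fun p : Fin n × Fin n => (p.1 < p.2 ∧ σ p.2 < σ p.1) ∧ ¬ p.1 = i))
    (p := fun p => p.2 = i)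
  rw [Finset.filter_filter, Finset.filter_filter] at h2
  have hA : (univ.filter (fun p : Fin n × Fin n => (p.1 < p.2 ∧ σ p.2 < σ p.1) ∧ p.1 = i)).card
      = (univ.filter (fun t : Fin n => i < t ∧ σ t < σ i)).card := by
    apply Finset.card_bij (fun p _ => p.2)
    · intro p hp
      simp only [Finset.mem_filter, Finset.mem_univ, true_and] at hp ⊢
      obtain ⟨⟨ha, hb⟩, hc⟩ := hp
      rw [hc] at ha hb
      exact ⟨ha, hb⟩
    · intro a ha b hb hab
      simp only [Finset.mem_filter, Finset.mem_univ, true_and] at ha hb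
      exact Prod.ext (ha.2.trans hb.2.symm) hab
    · intro t htm
      simp only [Finset.mem_filter, Finset.mem_univ, true_and] at htm
      exact ⟨(i, t), by simp [htm.1, htm.2], rfl⟩
  have hB : (univ.filter (fun p : Fin n × Fin n =>
        ((p.1 < p.2 ∧ σ p.2 < σ p.1) ∧ ¬ p.1 = i) ∧ p.2 = i)).card
      = (univ.filter (fun t : Fin n => t < i ∧ σ i < σ t)).card := by
    apply Finset.card_bij (fun p _ => p.1)
    · intro p hp
      simp only [Finset.mem_filter, Finset.mem_univ, true_and] at hp ⊢
      obtain ⟨⟨⟨ha, hb⟩, _⟩, hc⟩ := hp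
      rw [hc] at ha hb
      exact ⟨ha, hb⟩
    · intro a ha b hb hab
      simp only [Finset.mem_filter, Finset.mem_univ, true_and] at ha hb
      exact Prod.ext hab (ha.2.trans hb.2.symm)
    · intro t htm
      simp only [Finset.mem_filter, Finset.mem_univ, true_and] at htm
      exact ⟨(t, i), by simp [htm.1, htm.2, ne_of_lt htm.1], rfl⟩
  have hC : univ.filter (fun p : Fin n × Fin n =>
        ((p.1 < p.2 ∧ σ p.2 < σ p.1) ∧ ¬ p.1 = i) ∧ ¬ p.2 = i)
      = univ.filter (fun p : Fin n × Fin n =>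
          p.1 ≠ i ∧ p.2 ≠ i ∧ p.1 < p.2 ∧ σ p.2 < σ p.1) :=
    Finset.filter_congr (fun p _ => by tauto)
  rw [hC, hB] at h2
  rw [hA] at h1
  omega


/-- **Proposition 2.3.** If `τ ∈ Q(π,i)` (same relative order off `i`) and
`π(i) = j < k = τ(i)`, then
`l(τ) − l(π) = |{t > i : j+1 ≤ π(t) ≤ k}| − |{t < i : j+1 ≤ π(t) ≤ k}|
             = |{t > i : j ≤ τ(t) ≤ k−1}| − |{t < i : j ≤ τ(t) ≤ k−1}|`. -/
theorem inversion_difference_of_reinsertion (n : ℕ) (π τ : Equiv.Perm (Fin n)) (i : Fin n)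
    (hQ : ∀ s t : Fin n, s ≠ i → t ≠ i → (π s < π t ↔ τ s < τ t))
    (hjk : π i < τ i) :
    ((inversions n τ : ℤ) - (inversions n π : ℤ) =
        ((Finset.univ.filter (fun t : Fin n => i < t ∧ π i < π t ∧ π t ≤ τ i)).card : ℤ)
          - ((Finset.univ.filter (fun t : Fin n => t < i ∧ π i < π t ∧ π t ≤ τ i)).card : ℤ)) ∧
    ((inversions n τ : ℤ) - (inversions n π : ℤ) =
        ((Finset.univ.filter (fun t : Fin n => i < t ∧ π i ≤ τ t ∧ τ t < τ i)).card : ℤ)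
          - ((Finset.univ.filter (fun t : Fin n => t < i ∧ π i ≤ τ t ∧ τ t < τ i)).card : ℤ)) := by
  classical
  have hmap := value_map n π τ i hQ hjk
  have hjk' : (π i : ℕ) < (τ i : ℕ) := hjk
  have hπs := inv_split n π i
  have hτs := inv_split n τ i
  have hN : (univ.filter (fun p : Fin n × Fin n =>
        p.1 ≠ i ∧ p.2 ≠ i ∧ p.1 < p.2 ∧ π p.2 < π p.1)).card
      = (univ.filter (fun p : Fin n × Fin n =>
          p.1 ≠ i ∧ p.2 ≠ i ∧ p.1 < p.2 ∧ τ p.2 < τ p.1)).card := by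
    congr 1
    refine Finset.filter_congr (fun p _ => ?_)
    constructor
    · rintro ⟨h1, h2, h3, h4⟩; exact ⟨h1, h2, h3, (hQ p.2 p.1 h2 h1).1 h4⟩
    · rintro ⟨h1, h2, h3, h4⟩; exact ⟨h1, h2, h3, (hQ p.2 p.1 h2 h1).2 h4⟩
  have hLsplit : (univ.filter (fun t : Fin n => t < i ∧ π i < π t)).card
      = (univ.filter (fun t : Fin n => t < i ∧ π i < π t ∧ π t ≤ τ i)).card
        + (univ.filter (fun t : Fin n => t < i ∧ τ i < τ t)).card := by
    have hLτ : univ.filter (fun t : Fin n => t < i ∧ τ i < τ t)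
        = univ.filter (fun t : Fin n => t < i ∧ τ i < π t) :=
      Finset.filter_congr (fun t _ => and_congr_right fun hti => by
        rcases hmap t (ne_of_lt hti) with ⟨h1, h2⟩ | ⟨h1, h2, h3⟩ | ⟨h1, h2⟩ <;>
          (simp only [Fin.lt_def]; omega))
    rw [hLτ]
    have h := Finset.card_filter_add_card_filter_not
      (s := univ.filter (fun t : Fin n => t < i ∧ π i < π t)) (p := fun t => π t ≤ τ i)
    rw [Finset.filter_filter, Finset.filter_filter] at h
    have e1 : univ.filter (fun t : Fin n => (t < i ∧ π i < π t) ∧ π t ≤ τ i)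
        = univ.filter (fun t : Fin n => t < i ∧ π i < π t ∧ π t ≤ τ i) :=
      Finset.filter_congr (fun t _ => by tauto)
    have e2 : univ.filter (fun t : Fin n => (t < i ∧ π i < π t) ∧ ¬ π t ≤ τ i)
        = univ.filter (fun t : Fin n => t < i ∧ τ i < π t) :=
      Finset.filter_congr (fun t _ => by
        simp only [Fin.lt_def, Fin.le_def, not_le]
        omega)
    rw [e1, e2] at h
    omega
  have hRsplit : (univ.filter (fun t : Fin n => i < t ∧ τ t < τ i)).card
      = (univ.filter (fun t : Fin n => i < t ∧ π i < π t ∧ π t ≤ τ i)).card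
        + (univ.filter (fun t : Fin n => i < t ∧ π t < π i)).card := by
    have h := Finset.card_filter_add_card_filter_not
      (s := univ.filter (fun t : Fin n => i < t ∧ τ t < τ i)) (p := fun t => π t < π i)
    rw [Finset.filter_filter, Finset.filter_filter] at h
    have e1 : univ.filter (fun t : Fin n => (i < t ∧ τ t < τ i) ∧ π t < π i)
        = univ.filter (fun t : Fin n => i < t ∧ π t < π i) :=
      Finset.filter_congr (fun t _ => by
        constructor
        · rintro ⟨⟨h1, _⟩, h2⟩; exact ⟨h1, h2⟩
        · rintro ⟨h1, h2⟩
          refine ⟨⟨h1, ?_⟩, h2⟩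
          rcases hmap t (ne_of_lt h1).symm with ⟨ha, hb⟩ | ⟨ha, hb, hc⟩ | ⟨ha, hb⟩ <;>
            (simp only [Fin.lt_def] at h2 ⊢; omega))
    have e2 : univ.filter (fun t : Fin n => (i < t ∧ τ t < τ i) ∧ ¬ π t < π i)
        = univ.filter (fun t : Fin n => i < t ∧ π i < π t ∧ π t ≤ τ i) :=
      Finset.filter_congr (fun t _ => by
        by_cases hti : i < t
        · have hti' : (i : ℕ) < (t : ℕ) := hti
          rcases hmap t (ne_of_lt hti).symm with ⟨ha, hb⟩ | ⟨ha, hb, hc⟩ | ⟨ha, hb⟩ <;>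
            (simp only [Fin.lt_def, Fin.le_def, not_lt]; omega)
        · simp [hti])
    rw [e1, e2] at h
    omega
  have hg1 : univ.filter (fun t : Fin n => i < t ∧ π i ≤ τ t ∧ τ t < τ i)
      = univ.filter (fun t : Fin n => i < t ∧ π i < π t ∧ π t ≤ τ i) :=
    Finset.filter_congr (fun t _ => and_congr_right fun hti => by
      rcases hmap t (ne_of_lt hti).symm with ⟨ha, hb⟩ | ⟨ha, hb, hc⟩ | ⟨ha, hb⟩ <;>
        (simp only [Fin.lt_def, Fin.le_def]; omega))
  have hg2 : univ.filter (fun t : Fin n => t < i ∧ π i ≤ τ t ∧ τ t < τ i)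
      = univ.filter (fun t : Fin n => t < i ∧ π i < π t ∧ π t ≤ τ i) :=
    Finset.filter_congr (fun t _ => and_congr_right fun hti => by
      rcases hmap t (ne_of_lt hti) with ⟨ha, hb⟩ | ⟨ha, hb, hc⟩ | ⟨ha, hb⟩ <;>
        (simp only [Fin.lt_def, Fin.le_def]; omega))
  constructor
  · omega
  · rw [hg1, hg2]
    omega
end

section
/- For any n ∈ ℕ, any q > 0 and any indices i, s, t ∈ {1,…,n}, setting d = |s−t|, one has min(q^d, q^{−d}) ≤ μ_{n,q}(π(i)=s) / μ_{n,q}(π(i)=t) ≤ max(q^d, q^{−d}). -/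
open Filter Finset MeasureTheory

/-!
Left multiplication by the transposition of two adjacent values `a, a + 1` is a bijection from
`{π | π i = a}` onto `{π | π i = a + 1}` that changes the number of inversions by exactly one,
so it changes each Mallows weight by a factor `q` or `q⁻¹`. Hence the probabilities of
`π i = a` and `π i = a + 1` are within a factor `max q q⁻¹` of each other, and chaining these
comparisons along `s, s + 1, …, t` gives the factor `max q q⁻¹ ^ |s - t|`.
-/

open Equiv

section Inversions

variable {n : ℕ}

theorem inversions_swap_mul_of_lt {a b : Fin n} (hab : (a : ℕ) + 1 = b) (π : Perm (Fin n))
    (h : π⁻¹ a < π⁻¹ b) : inversions n (swap a b * π) = inversions n π + 1 := by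
  have hnew : (π⁻¹ a, π⁻¹ b) ∉
      univ.filter fun p : Fin n × Fin n => p.1 < p.2 ∧ π p.2 < π p.1 := by
    simp only [mem_filter, mem_univ, true_and, Perm.coe_inv, apply_symm_apply, not_and, not_lt]
    intro _
    rw [Fin.le_def]
    omega
  rw [inversions, inversions, ← card_insert_of_notMem hnew]
  congr 1
  ext ⟨x, y⟩
  have hinj : x = y ↔ π x = π y := π.injective.eq_iff.symm
  have hab_lt : π x = a → π y = b → x < y := by
    rintro rfl rfl
    simpa using h
  have hba_lt : π x = b → π y = a → y < x := by
    rintro rfl rfl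
    simpa using h
  -- since `a` and `b` are adjacent values, `swap a b` preserves the relative order of every pair
  -- of values except `{a, b}` itself
  rw [mem_insert, mem_filter, mem_filter]
  simp only [mem_univ, true_and, Prod.mk.injEq, Perm.mul_apply, Perm.eq_inv_iff_eq,
    swap_apply_def]
  split_ifs <;> simp only [Fin.lt_def, Fin.ext_iff] at * <;> omega

theorem inversions_swap_mul_adjacent {a b : Fin n} (hab : (a : ℕ) + 1 = b) (π : Perm (Fin n)) :
    inversions n (swap a b * π) = inversions n π + 1 ∨
      inversions n π = inversions n (swap a b * π) + 1 := by
  have hne : π⁻¹ a ≠ π⁻¹ b := fun h => by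
    simp only [Perm.coe_inv, EmbeddingLike.apply_eq_iff_eq, Fin.ext_iff] at h
    omega
  rcases hne.lt_or_gt with h | h
  · exact Or.inl (inversions_swap_mul_of_lt hab π h)
  · right
    have h' : (swap a b * π)⁻¹ a < (swap a b * π)⁻¹ b := by
      simpa [Perm.mul_apply, swap_apply_left, swap_apply_right] using h
    simpa [← mul_assoc] using inversions_swap_mul_of_lt hab _ h'

end Inversions

theorem pow_le_max_inv_mul_pow {q : ℝ} (hq : 0 < q) {j k : ℕ} (h : j = k + 1 ∨ k = j + 1) :
    q ^ j ≤ max q q⁻¹ * q ^ k := by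
  rcases h with rfl | rfl
  · rw [pow_succ, mul_comm]
    gcongr
    exact le_max_left _ _
  · calc q ^ j = q⁻¹ * q ^ (j + 1) := by field_simp; ring
      _ ≤ max q q⁻¹ * q ^ (j + 1) := by gcongr; exact le_max_right _ _

theorem min_inv_eq_inv_max {x : ℝ} (hx : 0 < x) : min x x⁻¹ = (max x x⁻¹)⁻¹ :=
  eq_inv_of_mul_eq_one_left (by rw [min_mul_max, mul_inv_cancel₀ hx.ne'])

theorem max_inv_pow {q : ℝ} (hq : 0 < q) (k : ℕ) : max q q⁻¹ ^ k = max (q ^ k) (q⁻¹ ^ k) :=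
  pow_left_monotoneOn.map_max hq.le (inv_pos.2 hq).le

theorem inv_le_div_and_div_le {A B C : ℝ} (hB : 0 < B) (hC : 0 < C) (hAB : A ≤ C * B)
    (hBA : B ≤ C * A) : C⁻¹ ≤ A / B ∧ A / B ≤ C :=
  ⟨by rwa [le_div_iff₀ hB, inv_mul_le_iff₀ hC], by rwa [div_le_iff₀ hB]⟩

theorem le_pow_dist_mul_of_adjacent {n : ℕ} {f : Fin n → ℝ} {M : ℝ} (hM : 0 ≤ M)
    (hf : ∀ a b : Fin n, (a : ℕ) + 1 = b → f a ≤ M * f b ∧ f b ≤ M * f a) (a b : Fin n) :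
    f a ≤ M ^ (max (a : ℕ) b - min (a : ℕ) b) * f b := by
  have chain (k : ℕ) : ∀ a b : Fin n, (a : ℕ) + k = b →
      f a ≤ M ^ k * f b ∧ f b ≤ M ^ k * f a := by
    induction k with
    | zero =>
      intro a b h
      obtain rfl : a = b := Fin.ext (by omega)
      simp
    | succ k ih =>
      intro a b h
      have := b.isLt
      let c : Fin n := ⟨a + k, by omega⟩
      obtain ⟨hac, hca⟩ := ih a c rfl
      obtain ⟨hcb, hbc⟩ := hf c b (by simp only [c]; omega)
      constructor
      · calc f a ≤ M ^ k * (M * f b) := hac.trans (mul_le_mul_of_nonneg_left hcb (by positivity))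
          _ = M ^ (k + 1) * f b := by ring
      · calc f b ≤ M * (M ^ k * f a) := hbc.trans (mul_le_mul_of_nonneg_left hca hM)
          _ = M ^ (k + 1) * f a := by ring
  rcases le_total (a : ℕ) b with h | h
  · exact (chain _ a b (by omega)).1
  · exact (chain _ b a (by omega)).2

section Mallows

variable {n : ℕ} {q : ℝ}

theorem mallowsPMF_pos (hq : 0 < q) (π : Perm (Fin n)) : 0 < mallowsPMF n q π :=
  div_pos (pow_pos hq _) (sum_pos (fun _ _ => pow_pos hq _) univ_nonempty)

theorem mallowsPMF_swap_mul_le (hq : 0 < q) {a b : Fin n} (hab : (a : ℕ) + 1 = b)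
    (π : Perm (Fin n)) : mallowsPMF n q (swap a b * π) ≤ max q q⁻¹ * mallowsPMF n q π := by
  have hZ : 0 ≤ ∑ σ : Perm (Fin n), q ^ inversions n σ := sum_nonneg fun _ _ => by positivity
  rw [mallowsPMF, mallowsPMF, mul_div_assoc']
  gcongr
  exact pow_le_max_inv_mul_pow hq (inversions_swap_mul_adjacent hab π)

theorem mallowsProb_apply_pos (hq : 0 < q) (i a : Fin n) :
    0 < mallowsProb n q (fun π => π i = a) := by
  classical
  unfold mallowsProb
  refine sum_pos' (fun π _ => ?_) ⟨swap i a, mem_univ _, ?_⟩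
  · split_ifs
    exacts [(mallowsPMF_pos hq π).le, le_rfl]
  · rw [if_pos (swap_apply_left i a)]
    exact mallowsPMF_pos hq _

theorem mallowsProb_apply_le_of_swap_mul_le {M : ℝ} {a b : Fin n}
    (hswap : ∀ π, mallowsPMF n q (swap a b * π) ≤ M * mallowsPMF n q π) (i : Fin n) :
    mallowsProb n q (fun π => π i = b) ≤ M * mallowsProb n q (fun π => π i = a) := by
  classical
  unfold mallowsProb
  rw [← Equiv.sum_comp (Equiv.mulLeft (swap a b)), mul_sum]
  refine sum_le_sum fun σ _ => ?_
  simp only [Equiv.coe_mulLeft, Perm.mul_apply, swap_apply_eq_iff, swap_apply_right]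
  split_ifs
  exacts [hswap σ, by simp]

theorem mallowsProb_apply_adjacent (hq : 0 < q) (i : Fin n) {a b : Fin n}
    (hab : (a : ℕ) + 1 = b) :
    mallowsProb n q (fun π => π i = a) ≤ max q q⁻¹ * mallowsProb n q (fun π => π i = b) ∧
      mallowsProb n q (fun π => π i = b) ≤ max q q⁻¹ * mallowsProb n q (fun π => π i = a) :=
  ⟨mallowsProb_apply_le_of_swap_mul_le
      (fun π => swap_comm a b ▸ mallowsPMF_swap_mul_le hq hab π) i,
    mallowsProb_apply_le_of_swap_mul_le (mallowsPMF_swap_mul_le hq hab) i⟩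

theorem mallowsProb_apply_le_pow_mul (hq : 0 < q) (i a b : Fin n) :
    mallowsProb n q (fun π => π i = a) ≤
      max q q⁻¹ ^ (max (a : ℕ) b - min (a : ℕ) b) * mallowsProb n q (fun π => π i = b) :=
  le_pow_dist_mul_of_adjacent (f := fun c => mallowsProb n q (fun π => π i = c))
    (hq.le.trans (le_max_left _ _)) (fun _ _ => mallowsProb_apply_adjacent hq i) a b

theorem permAct_val_add_one (π : Perm (Fin n)) (i : Fin n) :
    permAct n π ((i : ℕ) + 1) = (π i : ℕ) + 1 := by
  rw [permAct, dif_pos ⟨by omega, i.isLt⟩]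
  simp

end Mallows

theorem exists_fin_eq_val_add_one {n i : ℕ} (h : 1 ≤ i ∧ i ≤ n) : ∃ j : Fin n, i = j + 1 :=
  ⟨⟨i - 1, by omega⟩, by simp only; omega⟩

/-- **Lemma 3.3.** For any `1 ≤ i, s, t ≤ n` and `q > 0`, with `d = |s − t|`,
`min(q^d, q^{−d}) ≤ μ_{n,q}(π(i)=s) / μ_{n,q}(π(i)=t) ≤ max(q^d, q^{−d})`. -/
theorem mallows_value_ratio_bound (n : ℕ) (q : ℝ) (hq : 0 < q)
    (i s t : ℕ) (hi : 1 ≤ i ∧ i ≤ n) (hs : 1 ≤ s ∧ s ≤ n) (ht : 1 ≤ t ∧ t ≤ n) :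
    min (q ^ (max s t - min s t)) (q⁻¹ ^ (max s t - min s t))
        ≤ mallowsProb n q (fun π => permAct n π i = s)
            / mallowsProb n q (fun π => permAct n π i = t) ∧
      mallowsProb n q (fun π => permAct n π i = s)
          / mallowsProb n q (fun π => permAct n π i = t)
        ≤ max (q ^ (max s t - min s t)) (q⁻¹ ^ (max s t - min s t)) := by
  obtain ⟨i₀, rfl⟩ := exists_fin_eq_val_add_one hi
  obtain ⟨s₀, rfl⟩ := exists_fin_eq_val_add_one hs
  obtain ⟨t₀, rfl⟩ := exists_fin_eq_val_add_one ht
  have hd : max ((s₀ : ℕ) + 1) (t₀ + 1) - min ((s₀ : ℕ) + 1) (t₀ + 1) =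
      max (s₀ : ℕ) t₀ - min (s₀ : ℕ) t₀ := by omega
  simp only [permAct_val_add_one, Nat.add_right_cancel_iff, Fin.val_inj, hd]
  rw [inv_pow, min_inv_eq_inv_max (by positivity), ← inv_pow, ← max_inv_pow hq]
  refine inv_le_div_and_div_le (mallowsProb_apply_pos hq i₀ t₀) (by positivity)
    (mallowsProb_apply_le_pow_mul hq i₀ s₀ t₀) ?_
  simpa only [max_comm, min_comm] using mallowsProb_apply_le_pow_mul hq i₀ t₀ s₀
end

section
/- Suppose {q_n} is a sequence of positive reals such that the limit β = lim_{n→∞} n(1−q_n) exists in ℝ. Then for any sequence {a_n} with a_n ∈ {1,…,n} and any 0 ≤ y₁ < y₂ ≤ 1: (i) limsup_{n→∞} μ_{n,q_n}( π(a_n)/ن ∈ [y₁,y₂] ) ≤ (y₂−y₁)·e^{|β|}, and (ii) liminf_{n→∞} μ_{n,q_n}( π(a_n)/n ∈ (y₁,y₂) ) ≥ (y₂−y₁)·e^{−|β|}. -/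
open Filter Finset MeasureTheory

/-!
Fix the position `p = a - 1`. Left multiplication by an adjacent transposition changes the
number of inversions by at most one, hence changes the Mallows weight by a factor at most
`ρ = max(q, q⁻¹) = exp |log q|`. Chaining such transpositions, the `n` weights of the events
`{π p = j}` are comparable up to the factor `ρ ^ (n - 1)`, so each value of `π p` has probability
between `1 / (n ρ^(n-1))` and `ρ^(n-1) / n`, while the interval contains `n (y₂ - y₁) ± 1` values.
Finally `ρₙ ^ (n - 1) = exp ((n - 1) |log qₙ|) → exp |β|` because `n log qₙ → -β`.
-/

lemma swap_lt_swap_iff_of_adjacent {n : ℕ} {c c' : Fin n} (hc : (c : ℕ) + 1 = c') {u v : Fin n}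
    (h₁ : ¬(u = c ∧ v = c')) (h₂ : ¬(u = c' ∧ v = c)) :
    Equiv.swap c c' u < Equiv.swap c c' v ↔ u < v := by
  simp only [Fin.lt_def]
  rw [Equiv.swap_apply_def, Equiv.swap_apply_def]
  split_ifs <;> simp only [Fin.ext_iff, not_and] at * <;> omega

lemma inversions_swap_mul_le {n : ℕ} {c c' : Fin n} (hc : (c : ℕ) + 1 = c')
    (π : Equiv.Perm (Fin n)) :
    inversions n (Equiv.swap c c' * π) ≤ inversions n π + 1 := by
  set i := π⁻¹ c
  set i' := π⁻¹ c'
  -- the swap reverses the relative order only of the two positions holding `c` and `c'`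
  have hsub : univ.filter (fun p : Fin n × Fin n =>
        p.1 < p.2 ∧ (Equiv.swap c c' * π) p.2 < (Equiv.swap c c' * π) p.1)
      ⊆ univ.filter (fun p : Fin n × Fin n => p.1 < p.2 ∧ π p.2 < π p.1)
        ∪ {(min i i', max i i')} := by
    intro ⟨u, v⟩ hp
    obtain ⟨huv, hinv⟩ := (mem_filter.mp hp).2
    simp only [mem_union, mem_filter, mem_univ, true_and, mem_singleton, Prod.mk.injEq]
    by_cases h₁ : π u = c ∧ π v = c'
    · have hu : u = i := Equiv.Perm.eq_inv_iff_eq.mpr h₁.1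
      have hv : v = i' := Equiv.Perm.eq_inv_iff_eq.mpr h₁.2
      subst hu hv
      exact Or.inr ⟨(min_eq_left huv.le).symm, (max_eq_right huv.le).symm⟩
    by_cases h₂ : π u = c' ∧ π v = c
    · have hu : u = i' := Equiv.Perm.eq_inv_iff_eq.mpr h₂.1
      have hv : v = i := Equiv.Perm.eq_inv_iff_eq.mpr h₂.2
      subst hu hv
      exact Or.inr ⟨(min_eq_right huv.le).symm, (max_eq_left huv.le).symm⟩
    refine Or.inl ⟨huv, (swap_lt_swap_iff_of_adjacent hc
      (fun h => h₂ h.symm) (fun h => h₁ h.symm)).mp hinv⟩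
  calc inversions n (Equiv.swap c c' * π)
      ≤ #(univ.filter (fun p : Fin n × Fin n => p.1 < p.2 ∧ π p.2 < π p.1)
          ∪ {(min i i', max i i')}) := card_le_card hsub
    _ ≤ inversions n π + 1 := card_union_le _ _

lemma pow_le_exp_abs_log_mul_pow {q : ℝ} (hq : 0 < q) {d e : ℕ} (hde : d ≤ e + 1)
    (hed : e ≤ d + 1) :
    q ^ d ≤ Real.exp |Real.log q| * q ^ e := by
  have hpow (k : ℕ) : q ^ k = Real.exp (k * Real.log q) := by
    rw [Real.exp_nat_mul, Real.exp_log hq]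
  have hde' : |(d : ℝ) - e| ≤ 1 := by
    have hde : (d : ℝ) ≤ e + 1 := by exact_mod_cast hde
    have hed : (e : ℝ) ≤ d + 1 := by exact_mod_cast hed
    exact abs_sub_le_iff.mpr ⟨by linarith, by linarith⟩
  rw [hpow, hpow, ← Real.exp_add, Real.exp_le_exp]
  calc (d : ℝ) * Real.log q = ((d : ℝ) - e) * Real.log q + e * Real.log q := by ring
    _ ≤ |((d : ℝ) - e) * Real.log q| + e * Real.log q := by gcongr; exact le_abs_self _
    _ ≤ |Real.log q| + e * Real.log q := by
        rw [abs_mul]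
        gcongr
        exact mul_le_of_le_one_left (abs_nonneg _) hde'

lemma pow_inversions_swap_mul_le {n : ℕ} {q : ℝ} (hq : 0 < q) {c c' : Fin n}
    (hc : (c : ℕ) + 1 = c') (π : Equiv.Perm (Fin n)) :
    q ^ inversions n (Equiv.swap c c' * π) ≤ Real.exp |Real.log q| * q ^ inversions n π := by
  refine pow_le_exp_abs_log_mul_pow hq (inversions_swap_mul_le hc π) ?_
  simpa [Equiv.swap_mul_self_mul] using inversions_swap_mul_le hc (Equiv.swap c c' * π)

lemma Fin.le_pow_mul_of_adjacent {n : ℕ} {f : Fin n → ℝ} {r : ℝ} (hr : 1 ≤ r)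
    (hf : ∀ i, 0 ≤ f i) (hstep : ∀ i j : Fin n, (i : ℕ) + 1 = j → f i ≤ r * f j ∧ f j ≤ r * f i)
    (j k : Fin n) :
    f j ≤ r ^ (n - 1) * f k := by
  have chain (d : ℕ) : ∀ j k : Fin n, (j : ℕ) + d = k → f j ≤ r ^ d * f k ∧ f k ≤ r ^ d * f j := by
    induction d with
    | zero =>
      intro j k h
      obtain rfl : j = k := Fin.ext (by omega)
      simp
    | succ d ih =>
      intro j k h
      obtain ⟨hj₁, hj₂⟩ := hstep j ⟨j + 1, by omega⟩ rfl
      obtain ⟨ih₁, ih₂⟩ := ih ⟨j + 1, by omega⟩ k (by simp only; omega)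
      constructor
      · calc f j ≤ r * (r ^ d * f k) := hj₁.trans (by gcongr)
          _ = r ^ (d + 1) * f k := by ring
      · calc f k ≤ r ^ d * (r * f j) := ih₂.trans (by gcongr)
          _ = r ^ (d + 1) * f j := by ring
  have hpow {d : ℕ} (hd : d ≤ n - 1) : r ^ d * f k ≤ r ^ (n - 1) * f k := by
    have := hf k
    gcongr
  rcases le_total (j : ℕ) k with h | h
  · exact (chain (k - j) j k (by omega)).1.trans (hpow (by omega))
  · exact (chain (j - k) k j (by omega)).2.trans (hpow (by omega))

noncomputable def fiberWeight (n : ℕ) (q : ℝ) (p j : Fin n) : ℝ :=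
  ∑ π : Equiv.Perm (Fin n) with π p = j, q ^ inversions n π

lemma fiberWeight_pos {n : ℕ} {q : ℝ} (hq : 0 < q) (p j : Fin n) : 0 < fiberWeight n q p j :=
  sum_pos (fun π _ => pow_pos hq _) ⟨Equiv.swap p j, by simp⟩

lemma fiberWeight_swap_le {n : ℕ} {q : ℝ} (hq : 0 < q) (p : Fin n) {c c' : Fin n}
    (hc : (c : ℕ) + 1 = c') (j : Fin n) :
    fiberWeight n q p (Equiv.swap c c' j) ≤ Real.exp |Real.log q| * fiberWeight n q p j := by
  simp only [fiberWeight, sum_filter, mul_sum]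
  rw [← Equiv.sum_comp (Equiv.mulLeft (Equiv.swap c c'))]
  refine sum_le_sum fun π _ => ?_
  simp only [Equiv.coe_mulLeft, Equiv.Perm.mul_apply, (Equiv.swap c c').injective.eq_iff]
  split_ifs
  · exact pow_inversions_swap_mul_le hq hc π
  · simp

lemma fiberWeight_le_pow_mul {n : ℕ} {q : ℝ} (hq : 0 < q) (p j k : Fin n) :
    fiberWeight n q p j ≤ Real.exp |Real.log q| ^ (n - 1) * fiberWeight n q p k := by
  refine Fin.le_pow_mul_of_adjacent (Real.one_le_exp (abs_nonneg _))
    (fun i => (fiberWeight_pos hq p i).le) (fun i i' h => ⟨?_, ?_⟩) j k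
  · simpa using fiberWeight_swap_le hq p h i'
  · simpa using fiberWeight_swap_le hq p h i

section ComparableWeights

variable {ι : Type*} [Fintype ι] [Nonempty ι] {w : ι → ℝ} {C : ℝ}

lemma sum_div_sum_le_of_le_mul (hw : ∀ i, 0 < w i) (hC : ∀ i j, w i ≤ C * w j)
    (s : Finset ι) :
    (∑ i ∈ s, w i) / ∑ i, w i ≤ C * #s / Fintype.card ι := by
  have hZ : 0 < ∑ i, w i := sum_pos (fun i _ => hw i) univ_nonempty
  rw [div_le_div_iff₀ hZ (by exact_mod_cast Fintype.card_pos)]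
  calc (∑ i ∈ s, w i) * Fintype.card ι = ∑ i ∈ s, ∑ _j : ι, w i := by
        simp [sum_mul, mul_comm]
    _ ≤ ∑ i ∈ s, ∑ j, C * w j := by gcongr with i _ j; exact hC i j
    _ = C * #s * ∑ i, w i := by simp [← mul_sum]; ring

lemma div_le_sum_div_sum_of_le_mul (hw : ∀ i, 0 < w i) (hC : ∀ i j, w i ≤ C * w j)
    (s : Finset ι) :
    #s / (C * Fintype.card ι) ≤ (∑ i ∈ s, w i) / ∑ i, w i := by
  obtain ⟨i₀⟩ := ‹Nonempty ι›
  have hC₁ : 1 ≤ C := le_of_mul_le_mul_right (by simpa using hC i₀ i₀) (hw i₀)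
  have hZ : 0 < ∑ i, w i := sum_pos (fun i _ => hw i) univ_nonempty
  rw [div_le_div_iff₀ (by positivity) hZ]
  calc (#s : ℝ) * ∑ j, w j = ∑ _i ∈ s, ∑ j, w j := by simp
    _ ≤ ∑ i ∈ s, ∑ _j : ι, C * w i := by gcongr with i _ j; exact hC j i
    _ = (∑ i ∈ s, w i) * (C * Fintype.card ι) := by
        rw [sum_mul]
        refine sum_congr rfl fun i _ => ?_
        simp only [sum_const, card_univ, nsmul_eq_mul]
        ring

end ComparableWeights

lemma mallowsPMF_nonneg {n : ℕ} {q : ℝ} (hq : 0 < q) (π : Equiv.Perm (Fin n)) :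
    0 ≤ mallowsPMF n q π := by
  unfold mallowsPMF
  positivity

lemma sum_mallowsPMF {n : ℕ} {q : ℝ} (hq : 0 < q) : ∑ π, mallowsPMF n q π = 1 := by
  simp only [mallowsPMF]
  rw [← sum_div, div_self (sum_pos (fun σ _ => pow_pos hq _) univ_nonempty).ne']

lemma mallowsProb_nonneg {n : ℕ} {q : ℝ} (hq : 0 < q) (P : Equiv.Perm (Fin n) → Prop) :
    0 ≤ mallowsProb n q P :=
  sum_nonneg fun π _ => by split_ifs <;> simp [mallowsPMF_nonneg hq π]

lemma mallowsProb_le_one {n : ℕ} {q : ℝ} (hq : 0 < q) (P : Equiv.Perm (Fin n) → Prop) :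
    mallowsProb n q P ≤ 1 :=
  calc mallowsProb n q P ≤ ∑ π, mallowsPMF n q π :=
        sum_le_sum fun π _ => by split_ifs <;> simp [mallowsPMF_nonneg hq π]
    _ = 1 := sum_mallowsPMF hq

lemma mallowsProb_apply_mem {n : ℕ} (q : ℝ) (p : Fin n) (J : Finset (Fin n)) :
    mallowsProb n q (fun π => π p ∈ J)
      = (∑ j ∈ J, fiberWeight n q p j) / ∑ j, fiberWeight n q p j := by
  have hfiber (s : Finset (Fin n)) :
      ∑ j ∈ s, fiberWeight n q p j = ∑ π, if π p ∈ s then q ^ inversions n π else 0 := by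
    simp only [fiberWeight, sum_filter]
    rw [sum_comm]
    simp
  rw [hfiber, hfiber, mallowsProb, sum_div]
  refine sum_congr rfl fun π _ => ?_
  split_ifs <;> simp [mallowsPMF]

lemma card_filter_div_mem_Icc_le {n : ℕ} {y₁ y₂ : ℝ} (hy₁ : 0 ≤ y₁) (hy : y₁ ≤ y₂) :
    (#{j : Fin n | ((j : ℝ) + 1) / n ∈ Set.Icc y₁ y₂} : ℝ) ≤ n * (y₂ - y₁) + 1 := by
  have hmaps : ∀ j ∈ ({j : Fin n | ((j : ℝ) + 1) / n ∈ Set.Icc y₁ y₂} : Finset (Fin n)),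
      (j : ℕ) + 1 ∈ Icc ⌈n * y₁⌉₊ ⌊n * y₂⌋₊ := by
    intro j hj
    have hn : (0 : ℝ) < n := by exact_mod_cast j.pos
    obtain ⟨h₁, h₂⟩ := (mem_filter.mp hj).2
    rw [le_div_iff₀ hn] at h₁
    rw [div_le_iff₀ hn] at h₂
    rw [mem_Icc, Nat.ceil_le, Nat.le_floor_iff (mul_nonneg hn.le (hy₁.trans hy))]
    push_cast
    constructor <;> linarith
  have hcard := card_le_card_of_injOn (fun j : Fin n => (j : ℕ) + 1) hmaps
    (fun i _ j _ h => Fin.ext (by simpa using h))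
  rw [Nat.card_Icc] at hcard
  calc (#{j : Fin n | ((j : ℝ) + 1) / n ∈ Set.Icc y₁ y₂} : ℝ)
      ≤ ((⌊n * y₂⌋₊ + 1 - ⌈n * y₁⌉₊ : ℕ) : ℝ) := by exact_mod_cast hcard
    _ ≤ n * (y₂ - y₁) + 1 := by
      rcases le_total ⌈n * y₁⌉₊ (⌊n * y₂⌋₊ + 1) with h | h
      · rw [Nat.cast_sub h]
        push_cast
        linarith [Nat.floor_le (mul_nonneg n.cast_nonneg (hy₁.trans hy)), Nat.le_ceil ((n : ℝ) * y₁)]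
      · rw [Nat.sub_eq_zero_of_le h, Nat.cast_zero]
        nlinarith [(Nat.cast_nonneg n : (0 : ℝ) ≤ n)]

lemma le_card_filter_div_mem_Ioo {n : ℕ} {y₁ y₂ : ℝ} (hy₁ : 0 ≤ y₁) (hy₂ : y₂ ≤ 1) :
    n * (y₂ - y₁) - 1 ≤ (#{j : Fin n | ((j : ℝ) + 1) / n ∈ Set.Ioo y₁ y₂} : ℝ) := by
  have hsub : Ioo ⌊n * y₁⌋₊ ⌈n * y₂⌉₊
      ⊆ ({j : Fin n | ((j : ℝ) + 1) / n ∈ Set.Ioo y₁ y₂} : Finset (Fin n)).image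
        (fun j : Fin n => (j : ℕ) + 1) := by
    intro m hm
    obtain ⟨h₁, h₂⟩ := mem_Ioo.mp hm
    have hmn : m < n := h₂.trans_le (Nat.ceil_le.mpr (by nlinarith))
    have hm : 0 < m := (Nat.zero_le _).trans_lt h₁
    have hn : (0 : ℝ) < n := by exact_mod_cast (hm.trans hmn)
    rw [Nat.floor_lt (by positivity)] at h₁
    rw [Nat.lt_ceil] at h₂
    refine mem_image.mpr ⟨⟨m - 1, by omega⟩, mem_filter.mpr ⟨mem_univ _, ?_⟩, by simp; omega⟩
    have hcast : (((m - 1 : ℕ) : ℝ) + 1) = m := by rw [Nat.cast_sub hm]; push_cast; ring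
    rw [Fin.val_mk, hcast, Set.mem_Ioo, lt_div_iff₀ hn, div_lt_iff₀ hn]
    constructor <;> linarith
  have hcard := (card_le_card hsub).trans card_image_le
  rw [Nat.card_Ioo] at hcard
  calc (n : ℝ) * (y₂ - y₁) - 1 ≤ ((⌈n * y₂⌉₊ - ⌊n * y₁⌋₊ - 1 : ℕ) : ℝ) := by
        rcases le_total (⌊n * y₁⌋₊ + 1) ⌈n * y₂⌉₊ with h | h
        · rw [Nat.sub_sub, Nat.cast_sub h]
          push_cast
          linarith [Nat.floor_le (mul_nonneg n.cast_nonneg hy₁), Nat.le_ceil ((n : ℝ) * y₂)]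
        · have : (⌈n * y₂⌉₊ : ℝ) ≤ ⌊n * y₁⌋₊ + 1 := by exact_mod_cast h
          linarith [Nat.floor_le (mul_nonneg n.cast_nonneg hy₁), Nat.le_ceil ((n : ℝ) * y₂),
            Nat.cast_nonneg (α := ℝ) (⌈n * y₂⌉₊ - ⌊n * y₁⌋₊ - 1)]
    _ ≤ _ := by exact_mod_cast hcard

lemma permAct_of_mem {n : ℕ} (π : Equiv.Perm (Fin n)) {i : ℕ} (hi : 1 ≤ i ∧ i ≤ n) :
    permAct n π i = (π ⟨i - 1, by omega⟩ : ℕ) + 1 :=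
  dif_pos hi

lemma mallowsProb_permAct_eq {n : ℕ} (q : ℝ) {i : ℕ} (hi : 1 ≤ i ∧ i ≤ n) {S : Set ℝ}
    {J : Finset (Fin n)} (hJ : ∀ j, j ∈ J ↔ ((j : ℝ) + 1) / n ∈ S) :
    mallowsProb n q (fun π => (permAct n π i : ℝ) / n ∈ S)
      = mallowsProb n q (fun π => π ⟨i - 1, by omega⟩ ∈ J) := by
  congr
  ext π
  rw [hJ, permAct_of_mem π hi]
  push_cast
  rfl

lemma mallowsProb_permAct_mem_Icc_le {n : ℕ} {q : ℝ} (hq : 0 < q) {i : ℕ}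
    (hi : 1 ≤ i ∧ i ≤ n) {y₁ y₂ : ℝ} (hy₁ : 0 ≤ y₁) (hy : y₁ ≤ y₂) :
    mallowsProb n q (fun π => (permAct n π i : ℝ) / n ∈ Set.Icc y₁ y₂)
      ≤ ((y₂ - y₁) + 1 / n) * Real.exp |Real.log q| ^ (n - 1) := by
  have : Nonempty (Fin n) := ⟨⟨i - 1, by omega⟩⟩
  have hn : (0 : ℝ) < n := by exact_mod_cast (show 0 < n by omega)
  rw [mallowsProb_permAct_eq q hi (J := {j : Fin n | ((j : ℝ) + 1) / n ∈ Set.Icc y₁ y₂})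
    (fun j => mem_filter_univ j), mallowsProb_apply_mem]
  calc _ ≤ Real.exp |Real.log q| ^ (n - 1) * #{j : Fin n | ((j : ℝ) + 1) / n ∈ Set.Icc y₁ y₂}
          / Fintype.card (Fin n) :=
        sum_div_sum_le_of_le_mul (fiberWeight_pos hq _) (fiberWeight_le_pow_mul hq _) _
    _ ≤ Real.exp |Real.log q| ^ (n - 1) * (n * (y₂ - y₁) + 1) / n := by
        rw [Fintype.card_fin]
        gcongr
        exact card_filter_div_mem_Icc_le hy₁ hy
    _ = ((y₂ - y₁) + 1 / n) * Real.exp |Real.log q| ^ (n - 1) := by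
        field_simp

lemma le_mallowsProb_permAct_mem_Ioo {n : ℕ} {q : ℝ} (hq : 0 < q) {i : ℕ}
    (hi : 1 ≤ i ∧ i ≤ n) {y₁ y₂ : ℝ} (hy₁ : 0 ≤ y₁) (hy₂ : y₂ ≤ 1) :
    ((y₂ - y₁) - 1 / n) * (Real.exp |Real.log q| ^ (n - 1))⁻¹
      ≤ mallowsProb n q (fun π => (permAct n π i : ℝ) / n ∈ Set.Ioo y₁ y₂) := by
  have : Nonempty (Fin n) := ⟨⟨i - 1, by omega⟩⟩
  have hn : (0 : ℝ) < n := by exact_mod_cast (show 0 < n by omega)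
  rw [mallowsProb_permAct_eq q hi (J := {j : Fin n | ((j : ℝ) + 1) / n ∈ Set.Ioo y₁ y₂})
    (fun j => mem_filter_univ j), mallowsProb_apply_mem]
  calc ((y₂ - y₁) - 1 / n) * (Real.exp |Real.log q| ^ (n - 1))⁻¹
      = (n * (y₂ - y₁) - 1) / (Real.exp |Real.log q| ^ (n - 1) * n) := by
        field_simp
    _ ≤ #{j : Fin n | ((j : ℝ) + 1) / n ∈ Set.Ioo y₁ y₂}
          / (Real.exp |Real.log q| ^ (n - 1) * Fintype.card (Fin n)) := by
        rw [Fintype.card_fin]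
        gcongr
        exact le_card_filter_div_mem_Ioo hy₁ hy₂
    _ ≤ _ := div_le_sum_div_sum_of_le_mul (fiberWeight_pos hq _) (fiberWeight_le_pow_mul hq _) _

section Limits

open Topology

variable {q : ℕ → ℝ} {β : ℝ}

lemma tendsto_one_of_tendsto_mul_one_sub
    (hβ : Tendsto (fun n : ℕ => (n : ℝ) * (1 - q n)) atTop (𝓝 β)) :
    Tendsto q atTop (𝓝 1) := by
  have h : Tendsto (fun n : ℕ => (n : ℝ) * (1 - q n) * (1 / n)) atTop (𝓝 (β * 0)) :=
    hβ.mul tendsto_one_div_atTop_nhds_zero_nat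
  rw [mul_zero] at h
  have h' : Tendsto (fun n : ℕ => 1 - q n) atTop (𝓝 0) := by
    refine h.congr' ?_
    filter_upwards [eventually_ne_atTop 0] with n hn
    field_simp
  simpa using (tendsto_const_nhds (x := (1 : ℝ))).sub h'

/-- Squeeze between the bounds `1 - x⁻¹ ≤ log x ≤ x - 1`. -/
lemma tendsto_mul_log_of_tendsto_mul_one_sub (hq : ∀ n, 0 < q n)
    (hβ : Tendsto (fun n : ℕ => (n : ℝ) * (1 - q n)) atTop (𝓝 β)) :
    Tendsto (fun n : ℕ => (n : ℝ) * Real.log (q n)) atTop (𝓝 (-β)) := by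
  have hlower : Tendsto (fun n : ℕ => -((n : ℝ) * (1 - q n)) / q n) atTop (𝓝 (-β / 1)) :=
    hβ.neg.div (tendsto_one_of_tendsto_mul_one_sub hβ) one_ne_zero
  rw [div_one] at hlower
  refine tendsto_of_tendsto_of_tendsto_of_le_of_le hlower hβ.neg (fun n => ?_) (fun n => ?_)
  · have hqn := (hq n).ne'
    calc -((n : ℝ) * (1 - q n)) / q n = n * (1 - (q n)⁻¹) := by field_simp; ring
      _ ≤ n * Real.log (q n) := by gcongr; exact Real.one_sub_inv_le_log_of_pos (hq n)
  · calc (n : ℝ) * Real.log (q n) ≤ n * (q n - 1) := by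
          gcongr; exact Real.log_le_sub_one_of_pos (hq n)
      _ = -((n : ℝ) * (1 - q n)) := by ring

lemma tendsto_exp_abs_log_pow (hq : ∀ n, 0 < q n)
    (hβ : Tendsto (fun n : ℕ => (n : ℝ) * (1 - q n)) atTop (𝓝 β)) :
    Tendsto (fun n : ℕ => Real.exp |Real.log (q n)| ^ (n - 1)) atTop (𝓝 (Real.exp |β|)) := by
  have hlog : Tendsto (fun n : ℕ => Real.log (q n)) atTop (𝓝 0) := by
    have := (Real.continuousAt_log one_ne_zero).tendsto.comp
      (tendsto_one_of_tendsto_mul_one_sub hβ)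
    rwa [Real.log_one] at this
  have h : Tendsto (fun n : ℕ => |(n : ℝ) * Real.log (q n)| - |Real.log (q n)|) atTop
      (𝓝 (|β| - 0)) := by
    simpa using (tendsto_mul_log_of_tendsto_mul_one_sub hq hβ).abs.sub hlog.abs
  rw [sub_zero] at h
  refine (Real.continuous_exp.tendsto _).comp h |>.congr' ?_
  filter_upwards [eventually_ge_atTop 1] with n hn
  rw [Function.comp_apply, ← Real.exp_nat_mul, abs_mul, Nat.abs_cast, Nat.cast_sub hn]
  ring_nf

end Limits

/-- **Lemma 3.4.** Under `n(1-qₙ) → β`, for any sequence `aₙ ∈ {1,…,n}` and any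
`0 ≤ y₁ < y₂ ≤ 1`:
`limsupₙ μ_{n,qₙ}(π(aₙ)/n ∈ [y₁,y₂]) ≤ (y₂−y₁)·e^{|β|}` and
`liminfₙ μ_{n,qₙ}(π(aₙ)/n ∈ (y₁,y₂)) ≥ (y₂−y₁)·e^{−|β|}`. -/
theorem mallows_interval_probability_bounds
    (q : ℕ → ℝ) (hq : ∀ n, 0 < q n) (β : ℝ)
    (hβ : Tendsto (fun n : ℕ => (n : ℝ) * (1 - q n)) atTop (nhds β))
    (a : ℕ → ℕ) (ha : ∀ n : ℕ, 1 ≤ n → 1 ≤ a n ∧ a n ≤ n)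
    (y₁ y₂ : ℝ) (hy₁ : 0 ≤ y₁) (hy₁₂ : y₁ < y₂) (hy₂ : y₂ ≤ 1) :
    Filter.limsup (fun n : ℕ =>
        mallowsProb n (q n) (fun π => (permAct n π (a n) : ℝ) / n ∈ Set.Icc y₁ y₂)) atTop
      ≤ (y₂ - y₁) * Real.exp |β| ∧
    (y₂ - y₁) * Real.exp (-|β|)
      ≤ Filter.liminf (fun n : ℕ =>
          mallowsProb n (q n) (fun π => (permAct n π (a n) : ℝ) / n ∈ Set.Ioo y₁ y₂)) atTop := by
  have hρ := tendsto_exp_abs_log_pow hq hβ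
  have hupper : Tendsto (fun n : ℕ => ((y₂ - y₁) + 1 / n) * Real.exp |Real.log (q n)| ^ (n - 1))
      atTop (nhds ((y₂ - y₁) * Real.exp |β|)) := by
    simpa using (tendsto_const_nhds.add tendsto_one_div_atTop_nhds_zero_nat).mul hρ
  have hlower : Tendsto
      (fun n : ℕ => ((y₂ - y₁) - 1 / n) * (Real.exp |Real.log (q n)| ^ (n - 1))⁻¹)
      atTop (nhds ((y₂ - y₁) * Real.exp (-|β|))) := by
    simpa [Real.exp_neg] using (tendsto_const_nhds.sub tendsto_one_div_atTop_nhds_zero_nat).mul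
      (hρ.inv₀ (Real.exp_pos _).ne')
  constructor
  · refine (limsup_le_limsup ?_ (isCoboundedUnder_le_of_le atTop
      fun n => mallowsProb_nonneg (hq n) _) hupper.isBoundedUnder_le).trans hupper.limsup_eq.le
    filter_upwards [eventually_ge_atTop 1] with n hn
    exact mallowsProb_permAct_mem_Icc_le (hq n) (ha n hn) hy₁ hy₁₂.le
  · refine hlower.liminf_eq.ge.trans (liminf_le_liminf ?_ hlower.isBoundedUnder_ge
      (isCoboundedUnder_ge_of_le atTop fun n => mallowsProb_le_one (hq n) _))
    filter_upwards [eventually_ge_atTop 1] with n hn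
    exact le_mallowsProb_permAct_mem_Ioo (hq n) (ha n hn) hy₁ hy₂
end

section
/- For every β ∈ ℝ: ∫_0^1 u(x,y,β) dx = 1 for all y ∈ [0,1], and ∫_0^1 u(x,y,β) dy = 1 for all x ∈ [0,1]. -/
open Filter Finset MeasureTheory

/-!
With `t = β (2x - 1) / 4`, the denominator of `u(x, y, β)` becomes `D(t) = p eᵗ + q e⁻ᵗ` with
`p = sinh (β (1 - y) / 2)` and `q = sinh (β y / 2)`. For `y ∈ [0, 1]` these have the same sign and
are not both zero, so `D` never vanishes, and `∫₀¹ u dx = sinh (β / 2) ∫ dt / D(t)²` over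
`[-β/4, β/4]`. The function `1 / D(t)²` has the antiderivative `sinh (t - a) / (D(a) D(t))`, and
`D(-β/4) D(β/4) = p² + q² + 2pq cosh (β/2) = sinh² (β/2)` by the addition formula for `sinh`.
The other marginal follows from the symmetry `u(x, y) = u(y, x)`.
-/

open Real Set

namespace Real

theorem sinh_add_sq (a b : ℝ) :
    sinh (a + b) ^ 2 = sinh a ^ 2 + sinh b ^ 2 + 2 * sinh a * sinh b * cosh (a + b) := by
  rw [sinh_add, cosh_add]
  nlinarith [cosh_sq a, cosh_sq b]

theorem sinh_mul_sinh_nonneg {a b : ℝ} (h : 0 ≤ a * b) : 0 ≤ sinh a * sinh b := by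
  have hcosh : cosh (a - b) ≤ cosh (a + b) := cosh_le_cosh.2 (sq_le_sq.1 (by nlinarith))
  linarith [cosh_add a b, cosh_sub a b]

theorem mul_exp_add_mul_exp_neg_ne_zero {p q : ℝ} (hpq : 0 ≤ p * q) (h : p ≠ 0 ∨ q ≠ 0)
    (t : ℝ) : p * exp t + q * exp (-t) ≠ 0 := by
  intro h0
  have he : exp t * exp (-t) = 1 := by rw [← exp_add, add_neg_cancel, exp_zero]
  have hsq : (p * exp t) ^ 2 + p * q = 0 := by linear_combination (p * exp t) * h0 - p * q * he
  have hp : p = 0 := by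
    have : (p * exp t) ^ 2 = 0 := by linarith [sq_nonneg (p * exp t)]
    simpa [(exp_pos t).ne'] using this
  have hq : q = 0 := by simpa [hp, (exp_pos (-t)).ne'] using h0
  exact h.elim (· hp) (· hq)

theorem mul_exp_neg_add_mul_exp_mul (p q c : ℝ) :
    (p * exp (-c) + q * exp c) * (p * exp c + q * exp (-c))
      = p ^ 2 + q ^ 2 + 2 * p * q * cosh (2 * c) := by
  have he : exp c * exp (-c) = 1 := by rw [← exp_add, add_neg_cancel, exp_zero]
  have h2 : cosh (2 * c) = (exp c ^ 2 + exp (-c) ^ 2) / 2 := by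
    rw [cosh_eq, two_mul, neg_add, exp_add, exp_add]; ring
  rw [h2]
  linear_combination (p ^ 2 + q ^ 2) * he

theorem hasDerivAt_sinh_sub_div (p q a t : ℝ) (ha : p * exp a + q * exp (-a) ≠ 0)
    (ht : p * exp t + q * exp (-t) ≠ 0) :
    HasDerivAt
      (fun s => sinh (s - a) / ((p * exp a + q * exp (-a)) * (p * exp s + q * exp (-s))))
      (1 / (p * exp t + q * exp (-t)) ^ 2) t := by
  have hD : HasDerivAt (fun s => p * exp s + q * exp (-s)) (p * exp t - q * exp (-t)) t := by
    refine (((hasDerivAt_exp t).const_mul p).add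
      ((hasDerivAt_neg t).exp.const_mul q)).congr_deriv ?_
    ring
  have hN : HasDerivAt (fun s => sinh (s - a)) (cosh (t - a)) t := by
    simpa using ((hasDerivAt_id t).sub_const a).sinh
  refine (hN.div (hD.const_mul (p * exp a + q * exp (-a))) (mul_ne_zero ha ht)).congr_deriv ?_
  have key : cosh (t - a) * (p * exp t + q * exp (-t)) - sinh (t - a) * (p * exp t - q * exp (-t))
      = p * exp a + q * exp (-a) := by
    have he : exp t * exp (-t) = 1 := by rw [← exp_add, add_neg_cancel, exp_zero]
    rw [cosh_eq, sinh_eq]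
    simp only [sub_eq_add_neg, neg_add, neg_neg, exp_add]
    linear_combination (exp (-a) * q + exp a * p) * he
  rw [show cosh (t - a) * ((p * exp a + q * exp (-a)) * (p * exp t + q * exp (-t)))
      - sinh (t - a) * ((p * exp a + q * exp (-a)) * (p * exp t - q * exp (-t)))
      = (p * exp a + q * exp (-a)) ^ 2 by linear_combination (p * exp a + q * exp (-a)) * key]
  field_simp

theorem integral_one_div_mul_exp_add_mul_exp_neg_sq {p q : ℝ} (a b : ℝ)
    (h : ∀ t, p * exp t + q * exp (-t) ≠ 0) :
    ∫ t in a..b, 1 / (p * exp t + q * exp (-t)) ^ 2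
      = sinh (b - a) / ((p * exp a + q * exp (-a)) * (p * exp b + q * exp (-b))) := by
  rw [intervalIntegral.integral_eq_sub_of_hasDerivAt
    (fun t _ => hasDerivAt_sinh_sub_div p q a t (h a) (h t))
    (ContinuousOn.intervalIntegrable fun t _ => by
      fun_prop (disch := exact pow_ne_zero 2 (h t)))]
  simp

end Real

theorem mallowsU_denom_eq (x y β : ℝ) :
    exp (β / 4) * cosh (β * (x - y) / 2) - exp (-β / 4) * cosh (β * (x + y - 1) / 2)
      = sinh (β * (1 - y) / 2) * exp (β / 2 * x - β / 4)
        + sinh (β * y / 2) * exp (-(β / 2 * x - β / 4)) := by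
  simp only [cosh_eq, sinh_eq]
  ring_nf
  simp only [← exp_add]
  ring_nf

theorem mallowsU_comm (x y β : ℝ) : mallowsU y x β = mallowsU x y β := by
  rw [mallowsU, mallowsU, add_comm y x, show β * (y - x) / 2 = -(β * (x - y) / 2) by ring,
    cosh_neg]

theorem integral_mallowsU_left (β : ℝ) {y : ℝ} (hy : y ∈ Icc (0 : ℝ) 1) :
    ∫ x in (0 : ℝ)..1, mallowsU x y β = 1 := by
  rcases eq_or_ne β 0 with rfl | hβ
  · simp [mallowsU]
  have hβ2 : β / 2 ≠ 0 := div_ne_zero hβ two_ne_zero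
  have hsign : 0 ≤ sinh (β * (1 - y) / 2) * sinh (β * y / 2) :=
    sinh_mul_sinh_nonneg (by nlinarith [mul_nonneg (sub_nonneg.2 hy.2) hy.1, sq_nonneg β])
  have hnontriv : sinh (β * (1 - y) / 2) ≠ 0 ∨ sinh (β * y / 2) ≠ 0 := by
    rcases eq_or_ne y 1 with rfl | hy1
    · exact .inr (sinh_ne_zero.2 (by rwa [mul_one]))
    · exact .inl (sinh_ne_zero.2 (div_ne_zero (mul_ne_zero hβ (sub_ne_zero.2 hy1.symm))
        two_ne_zero))
  have hD := mul_exp_add_mul_exp_neg_ne_zero hsign hnontriv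
  have hends : (sinh (β * (1 - y) / 2) * exp (-(β / 4)) + sinh (β * y / 2) * exp (β / 4))
      * (sinh (β * (1 - y) / 2) * exp (β / 4) + sinh (β * y / 2) * exp (-(β / 4)))
      = sinh (β / 2) ^ 2 := by
    rw [mul_exp_neg_add_mul_exp_mul, show 2 * (β / 4) = β * (1 - y) / 2 + β * y / 2 by ring,
      show β / 2 = β * (1 - y) / 2 + β * y / 2 by ring, sinh_add_sq]
  calc ∫ x in (0 : ℝ)..1, mallowsU x y β
      = ∫ x in (0 : ℝ)..1, β / 2 * sinh (β / 2) *
          (1 / (sinh (β * (1 - y) / 2) * exp (β / 2 * x - β / 4)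
            + sinh (β * y / 2) * exp (-(β / 2 * x - β / 4))) ^ 2) := by
        refine intervalIntegral.integral_congr fun x _ => ?_
        rw [mallowsU, if_neg hβ, mallowsU_denom_eq]
        ring
    _ = sinh (β / 2) * ∫ t in -(β / 4)..β / 4,
          1 / (sinh (β * (1 - y) / 2) * exp t + sinh (β * y / 2) * exp (-t)) ^ 2 := by
        rw [intervalIntegral.integral_const_mul, intervalIntegral.integral_comp_mul_sub
          (fun t => 1 / (sinh (β * (1 - y) / 2) * exp t + sinh (β * y / 2) * exp (-t)) ^ 2) hβ2,
          smul_eq_mul, mul_comm (β / 2), mul_assoc, mul_inv_cancel_left₀ hβ2,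
          show β / 2 * 0 - β / 4 = -(β / 4) by ring, show β / 2 * 1 - β / 4 = β / 4 by ring]
    _ = 1 := by
        rw [integral_one_div_mul_exp_add_mul_exp_neg_sq _ _ hD, neg_neg, hends,
          show β / 4 - -(β / 4) = β / 2 by ring]
        field_simp [sinh_ne_zero.2 hβ2]

/-- **Lemma 3.5.** The density `u(·,·,β)` is doubly stochastic:
`∫₀¹ u(x,y,β) dx = 1` for all `y ∈ [0,1]` and `∫₀¹ u(x,y,β) dy = 1` for all `x ∈ [0,1]`. -/
theorem mallowsU_doubly_stochastic (β : ℝ) :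
    (∀ y ∈ Set.Icc (0 : ℝ) 1, (∫ x in (0:ℝ)..1, mallowsU x y β) = 1) ∧
    (∀ x ∈ Set.Icc (0 : ℝ) 1, (∫ y in (0:ℝ)..1, mallowsU x y β) = 1) := by
  refine ⟨fun y hy => integral_mallowsU_left β hy, fun x hx => ?_⟩
  simpa only [mallowsU_comm] using integral_mallowsU_left β hx
end

section
/- For any 0 ≤ a < b ≤ 1, any y ∈ [0,1] and any β ∈ ℝ, one has ∫_0^y u(a,t,β) dt = ∫_0^{y'} u(a/b, t, b·β) dt, where y' := (1/b)·∫_0^b ∫_0^y u(x,t,β) dt dx. -/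
open Filter Finset MeasureTheory

open Real

/-! For `β ≠ 0` put `E = e^β`, `X = e^{βx}`, `T = e^{βt}` and `D = E(X - 1) + T(E - X)`. Then
`u(x,t,β) = β E (E - 1) X T / D²`, so `∫₀ᵗ u(x,s,β) ds = E(T - 1)/D`, a Möbius function of `T`, and
`x - (log D)/β` is a primitive of it in `x`. This gives `e^{bβy'} = e^{bβ} D(0,y)/D(b,y)` in closed
form, after which both sides are the same rational function. Since `u ≥ 0` has total mass `1`,
`y' ∈ [0,1]`, so the closed form also applies on the right-hand side. -/

theorem moebius_rescale {K : Type*} [Field K] {E X Z T : K}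
    (hX : E * (X - 1) + T * (E - X) ≠ 0) (hZ : E * (Z - 1) + T * (E - Z) ≠ 0)
    (hZ₀ : Z ≠ 0) (hZ₁ : Z ≠ 1) :
    let T' := Z * (T * (E - 1) / (E * (Z - 1) + T * (E - Z)))
    E * (T - 1) / (E * (X - 1) + T * (E - X)) = Z * (T' - 1) / (Z * (X - 1) + T' * (Z - X)) := by
  intro T'
  have hden : Z * (X - 1) + T' * (Z - X) =
      Z * (Z - 1) * (E * (X - 1) + T * (E - X)) / (E * (Z - 1) + T * (E - Z)) := by
    simp only [T']
    field_simp
    ring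
  have hZ₁' : Z - 1 ≠ 0 := sub_ne_zero.2 hZ₁
  rw [hden]
  simp only [T']
  field_simp
  ring

noncomputable def mallowsDenom (β x t : ℝ) : ℝ :=
  exp β * (exp (β * x) - 1) + exp (β * t) * (exp β - exp (β * x))

noncomputable def mallowsCDF (β x t : ℝ) : ℝ :=
  exp β * (exp (β * t) - 1) / mallowsDenom β x t

theorem mallowsDenom_zero_left (β t : ℝ) : mallowsDenom β 0 t = exp (β * t) * (exp β - 1) := by
  simp [mallowsDenom]

-- `X(E - 1) ≤ D ≤ E(E - 1)`, and both bounds have the sign of `β`.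
theorem mul_mallowsDenom_pos {β x t : ℝ} (hβ : β ≠ 0) (hx : x ∈ Set.Icc (0 : ℝ) 1)
    (ht : t ∈ Set.Icc (0 : ℝ) 1) : 0 < β * mallowsDenom β x t := by
  obtain ⟨hx₀, hx₁⟩ := hx
  obtain ⟨ht₀, ht₁⟩ := ht
  have hT := exp_pos (β * t)
  rcases hβ.lt_or_gt with hβ | hβ
  · have h₁ : exp β < 1 := exp_lt_one_iff.2 hβ
    have h₂ : exp β ≤ exp (β * x) := exp_le_exp.2 (by nlinarith)
    have h₃ : exp β ≤ exp (β * t) := exp_le_exp.2 (by nlinarith)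
    refine mul_pos_of_neg_of_neg hβ ?_
    unfold mallowsDenom
    nlinarith [mul_nonneg (sub_nonneg.2 h₂) (sub_nonneg.2 h₃), exp_pos β]
  · have h₁ : 1 < exp β := one_lt_exp_iff.2 hβ
    have h₂ : 1 ≤ exp (β * x) := one_le_exp (by positivity)
    have h₃ : exp (β * x) ≤ exp β := exp_le_exp.2 (by nlinarith)
    have h₄ : 1 ≤ exp (β * t) := one_le_exp (by positivity)
    refine mul_pos hβ ?_
    unfold mallowsDenom
    nlinarith [mul_nonneg (sub_nonneg.2 h₄) (sub_nonneg.2 h₃)]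

theorem mallowsDenom_ne_zero {β x t : ℝ} (hβ : β ≠ 0) (hx : x ∈ Set.Icc (0 : ℝ) 1)
    (ht : t ∈ Set.Icc (0 : ℝ) 1) : mallowsDenom β x t ≠ 0 :=
  right_ne_zero_of_mul (mul_mallowsDenom_pos hβ hx ht).ne'

theorem cosh_sub_cosh_eq_mallowsDenom (β x t : ℝ) :
    exp (β / 4) * cosh (β * (x - t) / 2) - exp (-β / 4) * cosh (β * (x + t - 1) / 2) =
      mallowsDenom β x t / (2 * exp (β * (x + t) / 2 + 3 * β / 4)) := by
  rw [eq_div_iff (by positivity), mallowsDenom, cosh_eq, cosh_eq]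
  ring_nf
  simp only [← exp_add]
  ring_nf

theorem mallowsU_eq (x t : ℝ) {β : ℝ} (hβ : β ≠ 0) :
    mallowsU x t β =
      β * exp β * (exp β - 1) * exp (β * x) * exp (β * t) / mallowsDenom β x t ^ 2 := by
  rw [mallowsU, if_neg hβ, cosh_sub_cosh_eq_mallowsDenom, sinh_eq]
  rcases eq_or_ne (mallowsDenom β x t) 0 with hD | hD
  · simp [hD]
  field_simp
  ring_nf
  simp only [sq, ← exp_add]
  ring_nf

theorem mallowsU_nonneg (x t β : ℝ) : 0 ≤ mallowsU x t β := by
  unfold mallowsU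
  split_ifs
  · exact zero_le_one
  · have : 0 ≤ β / 2 * sinh (β / 2) := by
      rcases le_total 0 β with hβ | hβ
      · exact mul_nonneg (by linarith) (sinh_nonneg_iff.2 (by linarith))
      · exact mul_nonneg_of_nonpos_of_nonpos (by linarith) (sinh_nonpos_iff.2 (by linarith))
    positivity

theorem continuousOn_mallowsU {x : ℝ} (β : ℝ) (hx : x ∈ Set.Icc (0 : ℝ) 1) :
    ContinuousOn (fun t => mallowsU x t β) (Set.Icc 0 1) := by
  rcases eq_or_ne β 0 with rfl | hβ
  · simp only [mallowsU, if_true]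
    exact continuousOn_const
  refine ContinuousOn.congr ?_ fun t _ => mallowsU_eq x t hβ
  refine ContinuousOn.div (by fun_prop) (by unfold mallowsDenom; fun_prop) fun t ht => ?_
  exact pow_ne_zero 2 (mallowsDenom_ne_zero hβ hx ht)

theorem continuousOn_mallowsCDF_left {β y : ℝ} (hβ : β ≠ 0) (hy : y ∈ Set.Icc (0 : ℝ) 1) :
    ContinuousOn (fun x => mallowsCDF β x y) (Set.Icc 0 1) :=
  ContinuousOn.div (by fun_prop) (by unfold mallowsDenom; fun_prop)
    fun _ hx => mallowsDenom_ne_zero hβ hx hy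

theorem hasDerivAt_exp_const_mul (β x : ℝ) :
    HasDerivAt (fun s => exp (β * s)) (exp (β * x) * β) x := by
  simpa using ((hasDerivAt_id x).const_mul β).exp

theorem hasDerivAt_mallowsCDF {β x t : ℝ} (hβ : β ≠ 0) (hD : mallowsDenom β x t ≠ 0) :
    HasDerivAt (mallowsCDF β x) (mallowsU x t β) t := by
  have hT := hasDerivAt_exp_const_mul β t
  have hnum := (hT.sub_const 1).const_mul (exp β)
  have hden := (hT.mul_const (exp β - exp (β * x))).const_add (exp β * (exp (β * x) - 1))
  refine HasDerivAt.congr_deriv (f := mallowsCDF β x) (hnum.div hden hD) ?_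
  rw [mallowsU_eq x t hβ, mallowsDenom]
  field_simp
  ring

theorem integral_mallowsU {β x s t : ℝ} (hβ : β ≠ 0) (hx : x ∈ Set.Icc (0 : ℝ) 1)
    (hs : s ∈ Set.Icc (0 : ℝ) 1) (ht : t ∈ Set.Icc (0 : ℝ) 1) :
    ∫ r in s..t, mallowsU x r β = mallowsCDF β x t - mallowsCDF β x s := by
  have hsub : Set.uIcc s t ⊆ Set.Icc 0 1 := Set.uIcc_subset_Icc hs ht
  refine intervalIntegral.integral_eq_sub_of_hasDerivAt
    (fun r hr => hasDerivAt_mallowsCDF hβ (mallowsDenom_ne_zero hβ hx (hsub hr))) ?_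
  exact ((continuousOn_mallowsU β hx).mono hsub).intervalIntegrable

theorem mallowsCDF_zero_right (β x : ℝ) : mallowsCDF β x 0 = 0 := by
  simp [mallowsCDF]

theorem mallowsCDF_one_right {β : ℝ} (x : ℝ) (hβ : β ≠ 0) : mallowsCDF β x 1 = 1 := by
  have hE : exp β - 1 ≠ 0 := sub_ne_zero.2 (mt (exp_eq_one_iff β).1 hβ)
  have hD : mallowsDenom β x 1 = exp β * (exp β - 1) := by rw [mallowsDenom, mul_one]; ring
  rw [mallowsCDF, hD, mul_one]
  exact div_self (mul_ne_zero (exp_ne_zero β) hE)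

theorem integral_zero_mallowsU {β x y : ℝ} (hβ : β ≠ 0) (hx : x ∈ Set.Icc (0 : ℝ) 1)
    (hy : y ∈ Set.Icc (0 : ℝ) 1) : ∫ t in (0 : ℝ)..y, mallowsU x t β = mallowsCDF β x y := by
  rw [integral_mallowsU hβ hx (Set.left_mem_Icc.2 zero_le_one) hy, mallowsCDF_zero_right, sub_zero]

theorem mallowsCDF_mem_Icc {β x y : ℝ} (hβ : β ≠ 0) (hx : x ∈ Set.Icc (0 : ℝ) 1)
    (hy : y ∈ Set.Icc (0 : ℝ) 1) : mallowsCDF β x y ∈ Set.Icc 0 1 := by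
  have h₁ : 0 ≤ ∫ t in y..1, mallowsU x t β :=
    intervalIntegral.integral_nonneg hy.2 fun t _ => mallowsU_nonneg x t β
  rw [integral_mallowsU hβ hx hy (Set.right_mem_Icc.2 zero_le_one), mallowsCDF_one_right x hβ] at h₁
  refine ⟨?_, by linarith⟩
  rw [← integral_zero_mallowsU hβ hx hy]
  exact intervalIntegral.integral_nonneg hy.1 fun t _ => mallowsU_nonneg x t β

theorem hasDerivAt_log_mallowsDenom {β x y : ℝ} (hD : mallowsDenom β x y ≠ 0) :
    HasDerivAt (fun s => log (mallowsDenom β s y))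
      (β * exp (β * x) * (exp β - exp (β * y)) / mallowsDenom β x y) x := by
  have hX := hasDerivAt_exp_const_mul β x
  have hden : HasDerivAt (fun s => mallowsDenom β s y)
      (β * exp (β * x) * (exp β - exp (β * y))) x := by
    refine HasDerivAt.congr_deriv
      (((hX.sub_const 1).const_mul (exp β)).add ((hX.const_sub (exp β)).const_mul _)) ?_
    ring
  exact hden.log hD

theorem integral_mallowsCDF_left {β b y : ℝ} (hβ : β ≠ 0) (hb : b ∈ Set.Icc (0 : ℝ) 1)
    (hy : y ∈ Set.Icc (0 : ℝ) 1) :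
    ∫ x in (0 : ℝ)..b, mallowsCDF β x y =
      b - (log (mallowsDenom β b y) - log (mallowsDenom β 0 y)) / β := by
  have hsub : Set.uIcc 0 b ⊆ Set.Icc 0 1 := Set.uIcc_subset_Icc (Set.left_mem_Icc.2 zero_le_one) hb
  rw [intervalIntegral.integral_eq_sub_of_hasDerivAt
    (f := fun x => x - log (mallowsDenom β x y) / β) (fun x hx => ?_)
    ((continuousOn_mallowsCDF_left hβ hy).mono hsub).intervalIntegrable]
  · ring
  have hD := mallowsDenom_ne_zero hβ (hsub hx) hy
  refine ((hasDerivAt_id x).sub ((hasDerivAt_log_mallowsDenom hD).div_const β)).congr_deriv ?_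
  rw [mallowsCDF]
  field_simp
  rw [mallowsDenom]
  ring

theorem mallowsCDF_rescale {β a b y : ℝ} (hβ : β ≠ 0) (ha : a ∈ Set.Icc (0 : ℝ) 1)
    (hb : b ∈ Set.Ioc (0 : ℝ) 1) (hy : y ∈ Set.Icc (0 : ℝ) 1) :
    mallowsCDF β a y =
      mallowsCDF (b * β) (a / b) ((1 / b) * ∫ x in (0 : ℝ)..b, mallowsCDF β x y) := by
  have hb₀ : b ≠ 0 := hb.1.ne'
  have hbI : b ∈ Set.Icc (0 : ℝ) 1 := Set.Ioc_subset_Icc_self hb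
  have h₀ : (0 : ℝ) ∈ Set.Icc (0 : ℝ) 1 := Set.left_mem_Icc.2 zero_le_one
  have hratio : exp (log (mallowsDenom β 0 y) - log (mallowsDenom β b y)) =
      mallowsDenom β 0 y / mallowsDenom β b y := by
    have hpos : 0 < mallowsDenom β 0 y / mallowsDenom β b y := by
      rw [← mul_div_mul_left _ _ hβ]
      exact div_pos (mul_mallowsDenom_pos hβ h₀ hy) (mul_mallowsDenom_pos hβ hbI hy)
    rw [← log_div (mallowsDenom_ne_zero hβ h₀ hy) (mallowsDenom_ne_zero hβ hbI hy), exp_log hpos]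
  have hexp : exp (β * b * ((1 / b) * ∫ x in (0 : ℝ)..b, mallowsCDF β x y)) =
      exp (β * b) * (exp (β * y) * (exp β - 1) / mallowsDenom β b y) := by
    rw [integral_mallowsCDF_left hβ hbI hy, ← mallowsDenom_zero_left, ← hratio, ← exp_add]
    congr 1
    field_simp
    ring
  have harg : β * b * (a / b) = β * a := by field_simp
  rw [mul_comm b β]
  generalize (1 / b) * ∫ x in (0 : ℝ)..b, mallowsCDF β x y = y' at hexp ⊢
  rw [mallowsCDF, mallowsCDF, mallowsDenom, mallowsDenom, hexp, harg]
  exact moebius_rescale (mallowsDenom_ne_zero hβ ha hy) (mallowsDenom_ne_zero hβ hbI hy)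
    (exp_ne_zero _) (mt (exp_eq_one_iff _).1 (mul_ne_zero hβ hb₀))

theorem one_div_mul_intervalIntegral_mem_Icc {f : ℝ → ℝ} {b m M : ℝ} (hb : 0 < b)
    (hf : IntervalIntegrable f volume 0 b) (hfm : ∀ x ∈ Set.Icc 0 b, f x ∈ Set.Icc m M) :
    (1 / b) * ∫ x in (0 : ℝ)..b, f x ∈ Set.Icc m M := by
  have hm : b * m ≤ ∫ x in (0 : ℝ)..b, f x := by
    simpa using intervalIntegral.integral_mono_on hb.le intervalIntegrable_const hf
      fun x hx => (hfm x hx).1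
  have hM : ∫ x in (0 : ℝ)..b, f x ≤ b * M := by
    simpa using intervalIntegral.integral_mono_on hb.le hf intervalIntegrable_const
      fun x hx => (hfm x hx).2
  rw [one_div_mul_eq_div]
  exact ⟨(le_div_iff₀' hb).2 hm, (div_le_iff₀' hb).2 hM⟩

/-- **Lemma 5.2.** For `0 ≤ a < b ≤ 1`, `y ∈ [0,1]` and `β ∈ ℝ`,
`∫₀^y u(a,t,β) dt = ∫₀^{y'} u(a/b, t, bβ) dt` where
`y' = (1/b) ∫₀^b ∫₀^y u(x,t,β) dt dx`. -/
theorem mallowsU_rescaling (a b y β : ℝ)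
    (ha : 0 ≤ a) (hab : a < b) (hb : b ≤ 1) (hy : y ∈ Set.Icc (0 : ℝ) 1) :
    (∫ t in (0:ℝ)..y, mallowsU a t β)
      = ∫ t in (0:ℝ)..((1 / b) * ∫ x in (0:ℝ)..b, ∫ s in (0:ℝ)..y, mallowsU x s β),
          mallowsU (a / b) t (b * β) := by
  have hb₀ : 0 < b := ha.trans_lt hab
  rcases eq_or_ne β 0 with rfl | hβ
  · simp only [mallowsU, ↓reduceIte, intervalIntegral.integral_const, sub_zero, smul_eq_mul,
      mul_one, mul_zero, one_div, ne_eq, hb₀.ne', not_false_eq_true, inv_mul_cancel_left₀]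
  have hsub : Set.uIcc 0 b ⊆ Set.Icc 0 1 :=
    Set.uIcc_subset_Icc (Set.left_mem_Icc.2 zero_le_one) ⟨hb₀.le, hb⟩
  have hinner : ∫ x in (0 : ℝ)..b, ∫ s in (0 : ℝ)..y, mallowsU x s β =
      ∫ x in (0 : ℝ)..b, mallowsCDF β x y :=
    intervalIntegral.integral_congr fun x hx => integral_zero_mallowsU hβ (hsub hx) hy
  have hy' : (1 / b) * ∫ x in (0 : ℝ)..b, mallowsCDF β x y ∈ Set.Icc 0 1 :=
    one_div_mul_intervalIntegral_mem_Icc hb₀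
      ((continuousOn_mallowsCDF_left hβ hy).mono hsub).intervalIntegrable
      fun x hx => mallowsCDF_mem_Icc hβ (hsub (Set.Icc_subset_uIcc hx)) hy
  have haI : a ∈ Set.Icc (0 : ℝ) 1 := ⟨ha, hab.le.trans hb⟩
  have haI' : a / b ∈ Set.Icc (0 : ℝ) 1 := ⟨div_nonneg ha hb₀.le, (div_le_one hb₀).2 hab.le⟩
  rw [hinner, integral_zero_mallowsU hβ haI hy,
    integral_zero_mallowsU (mul_ne_zero hb₀.ne' hβ) haI' hy']
  exact mallowsCDF_rescale hβ haI ⟨hb₀, hb⟩ hy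
end

section
/- For any n ∈ ℕ, q > 0, any subsets A, B ⊆ [0,1] and any s, t, w ∈ {1,…,n} such that either w < min(s,t) or w > max(s,t), one has | E_{μ_{n,q}}[ 1_A(π(s)/n)·1_B(π(w)/n) ] − E_{μ_{n,q}}[ 1_A(π(t)/n)·1_B(π(w)/n) ] | ≤ M, where M = max(|1−q^d|, |1−q^{−d}|) and d = |s−t|. -/
open Filter Finset MeasureTheory

/- ### Auxiliary lemmas -/

lemma swap_adj_lt {n : ℕ} {x y u v : Fin n} (hxy : (y:ℕ) = x + 1)
    (huv : u < v) (h : ¬(u = x ∧ v = y)) :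
    Equiv.swap x y u < Equiv.swap x y v := by
  obtain ⟨u, hu⟩ := u; obtain ⟨v, hv⟩ := v; obtain ⟨x, hx⟩ := x; obtain ⟨y, hy⟩ := y
  simp only [Fin.mk.injEq, not_and] at h
  simp only [Fin.mk_lt_mk] at huv ⊢
  simp only [Fin.val_mk] at hxy
  simp only [Equiv.swap_apply_def, Fin.mk.injEq]
  split_ifs <;> simp only [Fin.mk_lt_mk] <;> omega

lemma inv_adj (n : ℕ) (π : Equiv.Perm (Fin n)) (x y : Fin n) (hxy : (y:ℕ) = x + 1) :
    inversions n (π * Equiv.swap x y) ≤ inversions n π + 1 := by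
  set τ := Equiv.swap x y with hτ
  set g : Fin n × Fin n → Fin n × Fin n := fun p => (τ p.1, τ p.2) with hg
  have key : (Finset.univ.filter (fun p : Fin n × Fin n => p.1 < p.2 ∧ (π * τ) p.2 < (π * τ) p.1))
      ⊆ insert (x, y) ((Finset.univ.filter
        (fun p : Fin n × Fin n => p.1 < p.2 ∧ π p.2 < π p.1)).image g) := by
    intro p hp
    simp only [Finset.mem_filter, Finset.mem_univ, true_and] at hp
    by_cases hpxy : p = (x, y)
    · simp [hpxy]
    · refine Finset.mem_insert_of_mem (Finset.mem_image.2 ⟨(τ p.1, τ p.2), ?_, ?_⟩)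
      · simp only [Finset.mem_filter, Finset.mem_univ, true_and]
        refine ⟨swap_adj_lt hxy hp.1 ?_, by simpa [Equiv.Perm.mul_apply] using hp.2⟩
        intro ⟨h1, h2⟩
        exact hpxy (Prod.ext h1 h2)
      · simp [hg, hτ, Equiv.swap_apply_self]
  calc inversions n (π * τ) ≤ _ := Finset.card_le_card key
    _ ≤ _ + 1 := Finset.card_insert_le _ _
    _ ≤ inversions n π + 1 := Nat.add_le_add_right Finset.card_image_le 1

lemma Zpos (n : ℕ) {q : ℝ} (hq : 0 < q) :
    0 < ∑ σ : Equiv.Perm (Fin n), q ^ inversions n σ :=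
  Finset.sum_pos (fun σ _ => pow_pos hq _) ⟨1, Finset.mem_univ 1⟩

lemma pmf_nonneg (n : ℕ) {q : ℝ} (hq : 0 < q) (π : Equiv.Perm (Fin n)) :
    0 ≤ mallowsPMF n q π :=
  div_nonneg (pow_nonneg hq.le _) (Zpos n hq).le

lemma sum_pmf (n : ℕ) {q : ℝ} (hq : 0 < q) :
    ∑ π : Equiv.Perm (Fin n), mallowsPMF n q π = 1 := by
  simp only [mallowsPMF, ← Finset.sum_div]
  exact div_self (Zpos n hq).ne'

lemma pow_diff_le {q : ℝ} (hq : 0 < q) {a b : ℕ} (h1 : b ≤ a + 1) (h2 : a ≤ b + 1) :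
    |q ^ b - q ^ a| ≤ q ^ a * max |1 - q| |1 - q⁻¹| := by
  have hM1 : |1 - q| ≤ max |1 - q| |1 - q⁻¹| := le_max_left _ _
  have hM2 : |1 - q⁻¹| ≤ max |1 - q| |1 - q⁻¹| := le_max_right _ _
  have hpa : (0:ℝ) < q ^ a := pow_pos hq a
  rcases (by omega : b = a + 1 ∨ b = a ∨ a = b + 1) with rfl | rfl | rfl
  · have : q ^ (a + 1) - q ^ a = q ^ a * (q - 1) := by ring
    rw [this, abs_mul, abs_of_pos hpa, abs_sub_comm]
    exact mul_le_mul_of_nonneg_left hM1 hpa.le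
  · simpa using mul_nonneg hpa.le ((abs_nonneg _).trans hM1)
  · have : q ^ b - q ^ (b + 1) = q ^ (b + 1) * (q⁻¹ - 1) := by
      field_simp; ring
    rw [this, abs_mul, abs_of_pos hpa, abs_sub_comm]
    exact mul_le_mul_of_nonneg_left hM2 hpa.le

lemma pmf_adj_diff (n : ℕ) {q : ℝ} (hq : 0 < q) (π : Equiv.Perm (Fin n)) (x y : Fin n)
    (hxy : (y:ℕ) = x + 1) :
    |mallowsPMF n q (π * Equiv.swap x y) - mallowsPMF n q π|
      ≤ mallowsPMF n q π * max |1 - q| |1 - q⁻¹| := by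
  have h1 := inv_adj n π x y hxy
  have h2 : inversions n π ≤ inversions n (π * Equiv.swap x y) + 1 := by
    have := inv_adj n (π * Equiv.swap x y) x y hxy
    rwa [mul_assoc, Equiv.swap_mul_self, mul_one] at this
  unfold mallowsPMF
  rw [div_sub_div_same, abs_div, abs_of_pos (Zpos n hq), div_mul_eq_mul_div]
  have := Zpos n hq
  gcongr
  · exact pow_diff_le hq h1 h2

lemma prob_adj (n : ℕ) {q : ℝ} (hq : 0 < q) (E : Equiv.Perm (Fin n) → Prop)
    (x y : Fin n) (hxy : (y:ℕ) = x + 1) :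
    |mallowsProb n q E - mallowsProb n q (fun π => E (π * Equiv.swap x y))|
      ≤ max |1 - q| |1 - q⁻¹| := by
  classical
  set τ := Equiv.swap x y with hτ
  set M := max |1 - q| |1 - q⁻¹| with hM
  have hM0 : 0 ≤ M := le_trans (abs_nonneg _) (le_max_left _ _)
  have hre : mallowsProb n q (fun π => E (π * τ))
      = ∑ π : Equiv.Perm (Fin n), if E π then mallowsPMF n q (π * τ) else 0 := by
    rw [mallowsProb]
    rw [← Equiv.sum_comp (Equiv.mulRight τ)
      (fun π => if E π then mallowsPMF n q (π * τ) else 0)]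
    refine Finset.sum_congr rfl fun π _ => ?_
    simp only [Equiv.coe_mulRight, mul_assoc, hτ, Equiv.swap_mul_self, mul_one]
  rw [mallowsProb, hre, ← Finset.sum_sub_distrib]
  refine (Finset.abs_sum_le_sum_abs _ _).trans ?_
  have step : ∀ π : Equiv.Perm (Fin n),
      |(if E π then mallowsPMF n q π else 0) - (if E π then mallowsPMF n q (π * τ) else 0)|
        ≤ mallowsPMF n q π * M := by
    intro π
    split_ifs with h
    · rw [abs_sub_comm]; exact pmf_adj_diff n hq π x y hxy
    · simpa using mul_nonneg (pmf_nonneg n hq π) hM0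
  refine (Finset.sum_le_sum fun π _ => step π).trans ?_
  rw [← Finset.sum_mul, sum_pmf n hq, one_mul]

lemma permAct_eq' (n : ℕ) (π : Equiv.Perm (Fin n)) (i : ℕ) (h1 : 1 ≤ i) (h2 : i ≤ n)
    (j : Fin n) (hj : (j : ℕ) = i - 1) : permAct n π i = (π j : ℕ) + 1 := by
  have h : (⟨i - 1, by omega⟩ : Fin n) = j := Fin.ext hj.symm
  rw [permAct, dif_pos ⟨h1, h2⟩, h]

lemma telescope (n : ℕ) {q : ℝ} (hq : 0 < q) (A B : Set ℝ) (w : ℕ)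
    (hw1 : 1 ≤ w) (hwn : w ≤ n) (d : ℕ) :
    ∀ s : ℕ, 1 ≤ s → s + d ≤ n → (w < s ∨ s + d < w) →
    |mallowsProb n q (fun π => (permAct n π s : ℝ)/n ∈ A ∧ (permAct n π w : ℝ)/n ∈ B)
     - mallowsProb n q (fun π => (permAct n π (s+d) : ℝ)/n ∈ A ∧ (permAct n π w : ℝ)/n ∈ B)|
      ≤ d * max |1 - q| |1 - q⁻¹| := by
  induction d with
  | zero => intro s _ _ _; simp
  | succ d ih =>
    intro s hs hsd hw
    have hih := ih s hs (by omega) (by omega)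
    have hb1 : s + d - 1 < n := by omega
    have hb2 : s + d < n := by omega
    have hxy : ((⟨s + d, hb2⟩ : Fin n) : ℕ) = ((⟨s + d - 1, hb1⟩ : Fin n) : ℕ) + 1 := by
      show s + d = s + d - 1 + 1; omega
    have hadj := prob_adj n hq
      (fun π => (permAct n π (s+(d+1)) : ℝ)/n ∈ A ∧ (permAct n π w : ℝ)/n ∈ B)
      ⟨s + d - 1, hb1⟩ ⟨s + d, hb2⟩ hxy
    have e1 : ∀ π : Equiv.Perm (Fin n),
        permAct n (π * Equiv.swap ⟨s + d - 1, hb1⟩ ⟨s + d, hb2⟩) (s+(d+1))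
          = permAct n π (s+d) := by
      intro π
      rw [permAct_eq' n _ (s+(d+1)) (by omega) (by omega) ⟨s + d, hb2⟩
            (show s + d = s + (d+1) - 1 by omega),
          permAct_eq' n π (s+d) (by omega) (by omega) ⟨s + d - 1, hb1⟩
            (show s + d - 1 = s + d - 1 by omega)]
      rw [Equiv.Perm.mul_apply, Equiv.swap_apply_right]
    have e2 : ∀ π : Equiv.Perm (Fin n),
        permAct n (π * Equiv.swap ⟨s + d - 1, hb1⟩ ⟨s + d, hb2⟩) w = permAct n π w := by
      intro π
      rw [permAct_eq' n _ w hw1 hwn ⟨w - 1, by omega⟩ rfl,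
          permAct_eq' n π w hw1 hwn ⟨w - 1, by omega⟩ rfl]
      rw [Equiv.Perm.mul_apply, Equiv.swap_apply_of_ne_of_ne]
      · exact Fin.ne_of_val_ne (show w - 1 ≠ s + d - 1 by omega)
      · exact Fin.ne_of_val_ne (show w - 1 ≠ s + d by omega)
    have hcong : (fun π : Equiv.Perm (Fin n) =>
        (permAct n (π * Equiv.swap ⟨s + d - 1, hb1⟩ ⟨s + d, hb2⟩) (s+(d+1)) : ℝ)/n ∈ A
          ∧ (permAct n (π * Equiv.swap ⟨s + d - 1, hb1⟩ ⟨s + d, hb2⟩) w : ℝ)/n ∈ B)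
        = (fun π => (permAct n π (s+d) : ℝ)/n ∈ A ∧ (permAct n π w : ℝ)/n ∈ B) := by
      funext π
      rw [e1 π, e2 π]
    rw [hcong] at hadj
    have tri := abs_sub_le
      (mallowsProb n q (fun π => (permAct n π s : ℝ)/n ∈ A ∧ (permAct n π w : ℝ)/n ∈ B))
      (mallowsProb n q (fun π => (permAct n π (s+d) : ℝ)/n ∈ A ∧ (permAct n π w : ℝ)/n ∈ B))
      (mallowsProb n q (fun π => (permAct n π (s+(d+1)) : ℝ)/n ∈ A ∧ (permAct n π w : ℝ)/n ∈ B))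
    refine tri.trans ?_
    have h2 : |mallowsProb n q (fun π => (permAct n π (s+d) : ℝ)/n ∈ A ∧ (permAct n π w : ℝ)/n ∈ B)
        - mallowsProb n q (fun π => (permAct n π (s+(d+1)) : ℝ)/n ∈ A ∧ (permAct n π w : ℝ)/n ∈ B)|
        ≤ max |1 - q| |1 - q⁻¹| := by rw [abs_sub_comm]; exact hadj
    refine (add_le_add hih h2).trans ?_
    push_cast
    ring_nf
    rfl

lemma key_ge_one {q : ℝ} (hq : 1 ≤ q) (d : ℕ) :
    (d : ℝ) * max |1 - q| |1 - q⁻¹| ≤ max |1 - q ^ d| |1 - q⁻¹ ^ d| := by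
  have h0 : 0 < q := lt_of_lt_of_le one_pos hq
  have hinv : q⁻¹ ≤ 1 := inv_le_one_of_one_le₀ hq
  have hinv0 : 0 < q⁻¹ := inv_pos.2 h0
  have h1 : |1 - q| = q - 1 := by rw [abs_sub_comm]; exact abs_of_nonneg (by linarith)
  have h2 : |1 - q⁻¹| = 1 - q⁻¹ := abs_of_nonneg (by linarith)
  have h3 : 1 - q⁻¹ ≤ q - 1 := by nlinarith [mul_inv_cancel₀ h0.ne']
  have hmax : max |1 - q| |1 - q⁻¹| = q - 1 := by rw [h1, h2]; exact max_eq_left h3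
  have hpow : (1:ℝ) ≤ q ^ d := one_le_pow₀ hq
  have hber : 1 + (d : ℝ) * (q - 1) ≤ q ^ d := by
    have := one_add_mul_le_pow (a := q - 1) (by linarith) d
    simpa using this
  have h4 : |1 - q ^ d| = q ^ d - 1 := by
    rw [abs_sub_comm]; exact abs_of_nonneg (by linarith)
  rw [hmax]
  have : (d : ℝ) * (q - 1) ≤ |1 - q ^ d| := by rw [h4]; linarith
  exact this.trans (le_max_left _ _)

lemma key_ineq {q : ℝ} (hq : 0 < q) (d : ℕ) :
    (d : ℝ) * max |1 - q| |1 - q⁻¹| ≤ max |1 - q ^ d| |1 - q⁻¹ ^ d| := by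
  rcases le_total 1 q with h | h
  · exact key_ge_one h d
  · have h' : 1 ≤ q⁻¹ := (one_le_inv₀ hq).2 h
    have := key_ge_one h' d
    rwa [inv_inv, max_comm (|1 - q⁻¹|), max_comm (|1 - q⁻¹ ^ d|)] at this

lemma main_le (n : ℕ) {q : ℝ} (hq : 0 < q) (A B : Set ℝ) (s t w : ℕ)
    (hs1 : 1 ≤ s) (htn : t ≤ n) (hw1 : 1 ≤ w) (hwn : w ≤ n)
    (hst : s ≤ t) (hw : w < s ∨ t < w) :
    |mallowsProb n q (fun π => (permAct n π s : ℝ)/n ∈ A ∧ (permAct n π w : ℝ)/n ∈ B)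
     - mallowsProb n q (fun π => (permAct n π t : ℝ)/n ∈ A ∧ (permAct n π w : ℝ)/n ∈ B)|
      ≤ max |1 - q ^ (t - s)| |1 - q⁻¹ ^ (t - s)| := by
  have htel := telescope n hq A B w hw1 hwn (t - s) s hs1 (by omega) (by omega)
  rw [show s + (t - s) = t from by omega] at htel
  exact htel.trans (key_ineq hq (t - s))

/-- **Lemma 5.7.** For any `A, B ⊆ [0,1]` and `s, t, w ∈ {1,…,n}` with `w < min(s,t)` or
`w > max(s,t)`,
`| E_{μ_{n,q}}[1_A(π(s)/n)·1_B(π(w)/n)] − E_{μ_{n,q}}[1_A(π(t)/n)·1_B(π(w)/n)] |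
  ≤ max(|1−q^d|, |1−q^{−d}|)` where `d = |s − t|`. -/
theorem mallows_indicator_product_expectation_diff (n : ℕ) (q : ℝ) (hq : 0 < q)
    (A B : Set ℝ) (hA : A ⊆ Set.Icc (0 : ℝ) 1) (hB : B ⊆ Set.Icc (0 : ℝ) 1)
    (s t w : ℕ) (hs : 1 ≤ s ∧ s ≤ n) (ht : 1 ≤ t ∧ t ≤ n) (hw : 1 ≤ w ∧ w ≤ n)
    (hwst : w < min s t ∨ w > max s t) :
    |mallowsProb n q (fun π =>
          (permAct n π s : ℝ) / n ∈ A ∧ (permAct n π w : ℝ) / n ∈ B)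
        - mallowsProb n q (fun π =>
          (permAct n π t : ℝ) / n ∈ A ∧ (permAct n π w : ℝ) / n ∈ B)|
      ≤ max |1 - q ^ (max s t - min s t)| |1 - q⁻¹ ^ (max s t - min s t)| := by
  rcases le_total s t with hst | hst
  · rw [min_eq_left hst, max_eq_right hst] at hwst ⊢
    exact main_le n hq A B s t w hs.1 ht.2 hw.1 hw.2 hst (by omega)
  · rw [min_eq_right hst, max_eq_left hst] at hwst ⊢
    rw [abs_sub_comm]
    exact main_le n hq A B t s w ht.1 hs.2 hw.1 hw.2 hst (by omega)
end
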